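/- arXiv:2601.07137 — 11 statements merged into one kernel-verified Lean document; each statement's English description precedes it below -/
import Mathlib

section
/- Let q be a prime power, let V(X) ∈ 𝔽_q[X] with deg(V) < q, let i ≥ 0 be an integer, and set U(X) = V(X)·Λ(X)^i where Λ(X) = X^q − X. Then for every integer ℓ with 0 ≤ ℓ < q, the ℓ-th Hasse derivative of U satisfies U^{[ℓ]}(X) ≡ (−1)^i · V^{[ℓ−i]}(X) (mod Λ(X)), where by convention V^{[j]}(X) = 0 when j < 0. -/
open Polynomial

section aux

variable {F : Type*} [Field F] [Fintype F] {q : ℕ} (hq : Fintype.card F = q)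

include hq

lemma choose_cast_zero {b : ℕ} (hb0 : 0 < b) (hb : b < q) : ((q.choose b : ℕ) : F) = 0 := by
  obtain ⟨n, hp, hcard⟩ := FiniteField.card F (ringChar F)
  have hqp : q = ringChar F ^ (n : ℕ) := by rw [← hq, hcard]
  have hdvd : ringChar F ∣ q.choose b := by
    rw [hqp]
    exact Nat.Prime.dvd_choose_pow hp (by omega) (by rw [← hqp]; omega)
  exact (CharP.cast_eq_zero_iff F (ringChar F) _).2 hdvd

lemma hd_lambda_zero {b : ℕ} (hb2 : 2 ≤ b) (hb : b < q) :
    hasseDeriv b (X ^ q - X : F[X]) = 0 := by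
  rw [map_sub, hasseDeriv_X _ (by omega), sub_zero, ← monomial_one_right_eq_X_pow,
    hasseDeriv_monomial]
  rw [mul_one, choose_cast_zero hq (by omega) hb, monomial_zero_right]

lemma hd_lambda_one : hasseDeriv 1 (X ^ q - X : F[X]) = -1 := by
  rw [hasseDeriv_one', derivative_sub, derivative_X_pow, derivative_X]
  rw [← hq, Nat.cast_card_eq_zero, map_zero, zero_mul, zero_sub]

lemma hd_lambda_pow (i : ℕ) : ∀ m : ℕ, m < q →
    hasseDeriv m ((X ^ q - X : F[X]) ^ i) =
      (i.choose m : F[X]) * (-1 : F[X]) ^ m * (X ^ q - X) ^ (i - m) := by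
  induction i with
  | zero =>
    intro m hm
    rcases Nat.eq_zero_or_pos m with rfl | hm0
    · simp
    · simp [hasseDeriv_apply_one _ hm0, Nat.choose_eq_zero_of_lt hm0]
  | succ i ih =>
    intro m hm
    rcases Nat.eq_zero_or_pos m with rfl | hm0
    · simp
    obtain ⟨k, rfl⟩ : ∃ k, m = k + 1 := ⟨m - 1, by omega⟩
    rw [pow_succ, mul_comm ((X ^ q - X : F[X]) ^ i), hasseDeriv_mul,
      Finset.Nat.sum_antidiagonal_eq_sum_range_succ
        (fun a b => hasseDeriv a (X ^ q - X : F[X]) * hasseDeriv b ((X ^ q - X : F[X]) ^ i))]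
    rw [← Finset.sum_subset (Finset.range_subset_range.2 (by omega : 2 ≤ k + 1 + 1))
      (fun b hb hb2 => by
        rw [hd_lambda_zero hq (by simp at hb2; omega)
          (by simp at hb; omega), zero_mul])]
    rw [Finset.sum_range_succ, Finset.sum_range_one]
    simp only [Nat.sub_zero, Nat.add_sub_cancel]
    rw [hasseDeriv_zero', hd_lambda_one hq, ih (k + 1) (by omega), ih k (by omega)]
    rcases le_or_gt (k + 1) i with hki | hki
    · have h1 : i - (k + 1) + 1 = i - k := by omega
      have h2 : i + 1 - (k + 1) = i - k := by omega
      rw [h2, ← h1, pow_succ, Nat.choose_succ_succ]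
      push_cast
      ring
    · have h0 : ((i.choose (k + 1) : ℕ) : F[X]) = 0 := by
        rw [Nat.choose_eq_zero_of_lt hki]; push_cast; ring
      rw [Nat.choose_succ_succ]
      rcases le_or_gt k i with h | h
      · have h2 : i + 1 - (k + 1) = i - k := by omega
        rw [h2]
        push_cast [h0]
        ring
      · have h2 : ((i.choose k : ℕ) : F[X]) = 0 := by
          rw [Nat.choose_eq_zero_of_lt h]; push_cast; ring
        push_cast [h0, h2]
        ring

end aux

/-- Let `q` be a prime power, `V ∈ 𝔽_q[X]` with `deg V < q`, `i ≥ 0`,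
and `U = V · Λ^i` where `Λ = X^q - X`. Then for `0 ≤ ℓ < q`,
`U^{[ℓ]} ≡ (-1)^i · V^{[ℓ-i]} (mod Λ)`, with the convention `V^{[j]} = 0` for `j < 0`. -/
theorem stmt0 {F : Type*} [Field F] [Fintype F] (q : ℕ) (hq : Fintype.card F = q)
    (V : F[X]) (hV : V.degree < (q : ℕ)) (i : ℕ) (U : F[X])
    (hU : U = V * (X ^ q - X) ^ i) (ℓ : ℕ) (hℓ : ℓ < q) :
    (X ^ q - X : F[X]) ∣
      hasseDeriv ℓ U - C ((-1 : F) ^ i) * (if i ≤ ℓ then hasseDeriv (ℓ - i) V else 0) := by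
  subst hU
  have hC : C ((-1 : F) ^ i) = (-1 : F[X]) ^ i := by rw [map_pow, map_neg, map_one]
  rw [hC, hasseDeriv_mul, Finset.Nat.sum_antidiagonal_eq_sum_range_succ
    (fun a b => hasseDeriv a V * hasseDeriv b ((X ^ q - X : F[X]) ^ i))]
  have hterm : ∀ k ∈ Finset.range (ℓ + 1), ℓ - k ≠ i →
      (X ^ q - X : F[X]) ∣ hasseDeriv k V * hasseDeriv (ℓ - k) ((X ^ q - X : F[X]) ^ i) := by
    intro k hk hki
    rw [hd_lambda_pow hq i (ℓ - k) (by omega)]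
    rcases lt_or_lt_iff_ne.2 hki with h | h
    · exact dvd_mul_of_dvd_right
        (dvd_mul_of_dvd_right (dvd_pow_self _ (by omega : i - (ℓ - k) ≠ 0)) _) _
    · rw [Nat.choose_eq_zero_of_lt h]
      simp
  by_cases hiℓ : i ≤ ℓ
  · rw [if_pos hiℓ,
      ← Finset.sum_erase_add _ _ (Finset.mem_range.2 (by omega : ℓ - i < ℓ + 1))]
    have hmain : hasseDeriv (ℓ - (ℓ - i)) ((X ^ q - X : F[X]) ^ i) = (-1 : F[X]) ^ i := by
      rw [hd_lambda_pow hq i (ℓ - (ℓ - i)) (by omega), (by omega : ℓ - (ℓ - i) = i),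
        Nat.choose_self, Nat.sub_self, pow_zero]
      push_cast
      ring
    rw [hmain, add_sub_assoc,
      (by ring : hasseDeriv (ℓ - i) V * (-1 : F[X]) ^ i -
        (-1 : F[X]) ^ i * hasseDeriv (ℓ - i) V = 0), add_zero]
    refine Finset.dvd_sum fun k hk => ?_
    have hk' := Finset.mem_of_mem_erase hk
    refine hterm k hk' ?_
    have hne := Finset.ne_of_mem_erase hk
    simp only [Finset.mem_range] at hk'
    omega
  · rw [if_neg hiℓ, mul_zero, sub_zero]
    refine Finset.dvd_sum fun k hk => ?_
    simp only [Finset.mem_range] at hk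
    exact hterm k (Finset.mem_range.2 hk) (by omega)
end

section
/- Let q be a prime power and let g(X) ∈ 𝔽_q[X] be a polynomial of degree at most d. Then for all integers j, ℓ with j ≥ ℓ ≥ 0, there exists a polynomial H(X) ∈ 𝔽_q[X], which is either zero or of degree at most d·ℓ − ℓ, such that the ℓ-th Hasse derivative of g(X)^j equals H(X)·g(X)^{j−ℓ}. -/
/-!
Induct on `j` via `g ^ (j + 1) = g * g ^ j` and the Leibniz rule for Hasse derivatives. Every
Leibniz term in which `g` itself is differentiated `a ≥ 1` times has the form
`D^a g · D^(ℓ-a)(g^j) = D^a g · H · g^(j-ℓ+a)`, so it still carries `g^(j+1-ℓ)` after setting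
aside `g^(a-1)`; and `D^a g · g^(a-1)` has degree at most `a(deg g - 1)`, the same rate per
derivative as the bound claimed for `H`. When `j ≤ ℓ` nothing needs factoring out, and
`deg D^ℓ(g^j) ≤ j deg g - ℓ ≤ ℓ(deg g - 1)` directly.
-/

open Polynomial Finset

namespace Polynomial

variable {R : Type*} [CommSemiring R]

theorem hasseDeriv_mul_eq_mul_add_sum_range (f g : R[X]) (ℓ : ℕ) :
    hasseDeriv ℓ (f * g) = f * hasseDeriv ℓ g +
      ∑ k ∈ range ℓ, hasseDeriv (k + 1) f * hasseDeriv (ℓ - (k + 1)) g := by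
  rw [hasseDeriv_mul, Nat.sum_antidiagonal_eq_sum_range_succ_mk, sum_range_succ', add_comm]
  simp only [hasseDeriv_zero', Nat.sub_zero]

theorem natDegree_hasseDeriv_succ_mul_pow_le (g : R[X]) (k : ℕ) :
    (hasseDeriv (k + 1) g * g ^ k).natDegree ≤ (k + 1) * (g.natDegree - 1) := by
  by_cases hk : g.natDegree < k + 1
  · simp [hasseDeriv_eq_zero_of_lt_natDegree g (k + 1) hk]
  obtain ⟨m, hm⟩ : ∃ m, g.natDegree = m + (k + 1) := ⟨g.natDegree - (k + 1), by omega⟩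
  calc (hasseDeriv (k + 1) g * g ^ k).natDegree
      ≤ (g.natDegree - (k + 1)) + k * g.natDegree :=
        natDegree_mul_le.trans (add_le_add (natDegree_hasseDeriv_le g _) natDegree_pow_le)
    _ = (k + 1) * (g.natDegree - 1) := by
        rw [hm, Nat.add_sub_cancel, show m + (k + 1) - 1 = m + k by omega]
        ring

theorem natDegree_hasseDeriv_pow_le_of_le (g : R[X]) {j ℓ : ℕ} (hjℓ : j ≤ ℓ) :
    (hasseDeriv ℓ (g ^ j)).natDegree ≤ ℓ * (g.natDegree - 1) :=
  calc (hasseDeriv ℓ (g ^ j)).natDegree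
      ≤ j * g.natDegree - ℓ :=
        (natDegree_hasseDeriv_le _ ℓ).trans (Nat.sub_le_sub_right natDegree_pow_le ℓ)
    _ ≤ ℓ * g.natDegree - ℓ := Nat.sub_le_sub_right (Nat.mul_le_mul_right _ hjℓ) ℓ
    _ = ℓ * (g.natDegree - 1) := (Nat.mul_sub_one ℓ _).symm

theorem exists_hasseDeriv_pow_eq_mul_pow (g : R[X]) (j ℓ : ℕ) :
    ∃ H : R[X], H.natDegree ≤ ℓ * (g.natDegree - 1) ∧
      hasseDeriv ℓ (g ^ j) = H * g ^ (j - ℓ) := by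
  induction j generalizing ℓ with
  | zero => exact ⟨_, natDegree_hasseDeriv_pow_le_of_le g ℓ.zero_le, by simp⟩
  | succ j ih =>
    by_cases hjℓ : j + 1 ≤ ℓ
    · exact ⟨_, natDegree_hasseDeriv_pow_le_of_le g hjℓ, by simp [Nat.sub_eq_zero_of_le hjℓ]⟩
    choose H hH_deg hH using ih
    refine ⟨H ℓ + ∑ k ∈ range ℓ, hasseDeriv (k + 1) g * g ^ k * H (ℓ - (k + 1)), ?_, ?_⟩
    · refine natDegree_add_le_of_degree_le (hH_deg ℓ) (natDegree_sum_le_of_forall_le _ _ ?_)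
      intro k hk
      have hkℓ : k + 1 ≤ ℓ := mem_range.mp hk
      calc (hasseDeriv (k + 1) g * g ^ k * H (ℓ - (k + 1))).natDegree
          ≤ (k + 1) * (g.natDegree - 1) + (ℓ - (k + 1)) * (g.natDegree - 1) :=
            natDegree_mul_le.trans
              (add_le_add (natDegree_hasseDeriv_succ_mul_pow_le g k) (hH_deg _))
        _ = ℓ * (g.natDegree - 1) := by rw [← add_mul, Nat.add_sub_cancel' hkℓ]
    · rw [pow_succ', hasseDeriv_mul_eq_mul_add_sum_range, add_mul, sum_mul, hH,
        show j + 1 - ℓ = j - ℓ + 1 by omega, pow_succ]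
      congr 1
      · ring
      refine sum_congr rfl fun k hk => ?_
      rw [hH, show j - (ℓ - (k + 1)) = k + (j - ℓ + 1) by have := mem_range.mp hk; omega, pow_add]
      ring

end Polynomial

theorem stmt1_general {F : Type*} [Field F] (d : ℕ) (g : F[X]) (hg : g.degree ≤ (d : ℕ))
    (j ℓ : ℕ) :
    ∃ H : F[X], H.degree ≤ ((d * ℓ - ℓ : ℕ) : WithBot ℕ) ∧
      hasseDeriv ℓ (g ^ j) = H * g ^ (j - ℓ) := by
  obtain ⟨H, hH_deg, hH⟩ := exists_hasseDeriv_pow_eq_mul_pow g j ℓ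
  refine ⟨H, degree_le_of_natDegree_le ?_, hH⟩
  calc H.natDegree ≤ ℓ * (g.natDegree - 1) := hH_deg
    _ ≤ ℓ * (d - 1) := by gcongr; exact natDegree_le_iff_degree_le.mpr hg
    _ = d * ℓ - ℓ := by rw [Nat.mul_sub_one, mul_comm]

/-- Let `g ∈ 𝔽_q[X]` have degree at most `d`. Then for all `j ≥ ℓ ≥ 0`
there exists `H ∈ 𝔽_q[X]`, which is zero or of degree at most `d·ℓ - ℓ`, such that the
`ℓ`-th Hasse derivative of `g^j` equals `H · g^(j-ℓ)`. -/
theorem stmt1 {F : Type*} [Field F] [Fintype F] (d : ℕ) (g : F[X]) (hg : g.degree ≤ (d : ℕ))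
    (j ℓ : ℕ) (hℓj : ℓ ≤ j) :
    ∃ H : F[X], H.degree ≤ ((d * ℓ - ℓ : ℕ) : WithBot ℕ) ∧
      hasseDeriv ℓ (g ^ j) = H * g ^ (j - ℓ) :=
  stmt1_general d g hg j ℓ
end

section
/- Let q be a prime power and let k, t be integers with 0 ≤ k < q and t ≥ 1. Let C(X) ∈ 𝔽_q[X] be a nonzero polynomial of the form C(X) = Σ_{i=0}^{t−1} C_i(X)·Λ(X)^i, where each C_i(X) ∈ 𝔽_q[X] has degree at most k and Λ(X) = X^q − X. Let H(X) ∈ 𝔽_q[X] be an irreducible polynomial and let μ be the largest integer such that H(X)^μ divides C(X). Then the residue of μ modulo q lies in the interval [0, k + t − 1]. -/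
open Polynomial

/-- Support of `(X^q - X + C c)^i`: every exponent with nonzero coefficient has the
form `q*s + m` with `s + m ≤ i`. -/
lemma pow_lam_support {L : Type*} [CommRing L] (q : ℕ) (c : L) :
    ∀ (i b : ℕ), ((((X : L[X]) ^ q - X + C c) ^ i).coeff b ≠ 0) →
      ∃ s m : ℕ, s + m ≤ i ∧ b = q * s + m := by
  intro i
  induction i with
  | zero =>
      intro b hb
      refine ⟨0, 0, by omega, ?_⟩
      simp only [pow_zero, coeff_one] at hb
      by_contra h
      simp [Ne.symm (by omega : b ≠ 0)] at hb
      omega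
  | succ i ih =>
      intro b hb
      rw [pow_succ, coeff_mul] at hb
      obtain ⟨⟨a, b'⟩, hmem, hne⟩ := Finset.exists_ne_zero_of_sum_ne_zero hb
      have ha : (((X : L[X]) ^ q - X + C c) ^ i).coeff a ≠ 0 := fun h => hne (by simp [h])
      have hb' : (((X : L[X]) ^ q - X + C c)).coeff b' ≠ 0 := fun h => hne (by simp [h])
      have hab : a + b' = b := (Finset.HasAntidiagonal.mem_antidiagonal.mp hmem)
      obtain ⟨s, m, hsm, hasm⟩ := ih a ha
      have hb'cases : b' = q ∨ b' = 1 ∨ b' = 0 := by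
        by_contra h
        push_neg at h
        obtain ⟨h1, h2, h3⟩ := h
        apply hb'
        simp [coeff_add, coeff_sub, coeff_X_pow, coeff_X, coeff_C, Ne.symm h1, h1,
          Ne.symm h2, h2, h3]
      rcases hb'cases with h | h | h
      · exact ⟨s + 1, m, by omega, by rw [← hab, hasm, h]; ring⟩
      · exact ⟨s, m + 1, by omega, by omega⟩
      · exact ⟨s, m, by omega, by omega⟩

/-- Let `0 ≤ k < q`, `t ≥ 1`, and let `C ∈ 𝔽_q[X]` be a nonzero polynomial of
the form `C = Σ_{i<t} C_i · Λ^i` with each `deg(C_i) ≤ k`, where `Λ = X^q - X`. Let `H` be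
irreducible and `μ` the largest power of `H` dividing `C`. Then `μ mod q ∈ [0, k + t - 1]`. -/
theorem stmt2 {F : Type*} [Field F] [Fintype F] (q : ℕ) (hq : Fintype.card F = q)
    (k t : ℕ) (hk : k < q) (ht : 1 ≤ t)
    (Ci : ℕ → F[X]) (hCi : ∀ i, (Ci i).degree ≤ (k : ℕ))
    (Cpoly : F[X]) (hC : Cpoly = ∑ i ∈ Finset.range t, Ci i * (X ^ q - X) ^ i)
    (hC0 : Cpoly ≠ 0)
    (H : F[X]) (hH : Irreducible H)
    (μ : ℕ) (hdvd : H ^ μ ∣ Cpoly) (hndvd : ¬ H ^ (μ + 1) ∣ Cpoly) :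
    μ % q ≤ k + t - 1 := by
  by_contra hcon
  push_neg at hcon
  have hq2 : 2 ≤ q := by
    have := Fintype.one_lt_card (α := F)
    omega
  have hμq : μ % q < q := Nat.mod_lt _ (by omega)
  have hbad : k + t ≤ μ % q := by omega
  -- Setup: algebraic closure and a root of H
  set L := AlgebraicClosure F with hL
  set φ : F →+* L := algebraMap F L with hφ
  have hHdeg : (H.map φ).degree ≠ 0 := by
    rw [degree_map]
    have := hH.natDegree_pos
    intro h
    rw [degree_eq_natDegree hH.ne_zero] at h
    exact_mod_cast (by omega : (H.natDegree : ℤ) ≠ 0) (by exact_mod_cast h)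
  obtain ⟨β, hβ⟩ := IsAlgClosed.exists_root (H.map φ) hHdeg
  -- decomposition Cpoly = H^μ * D with ¬ H ∣ D
  obtain ⟨D, hD⟩ := hdvd
  have hHD : ¬ H ∣ D := by
    intro ⟨E, hE⟩
    exact hndvd ⟨E, by rw [hD, hE, pow_succ]; ring⟩
  -- D(β) ≠ 0
  have hcop : IsCoprime H D := (hH.coprime_iff_not_dvd).mpr hHD
  have hDβ : eval β (D.map φ) ≠ 0 := by
    obtain ⟨u, v, huv⟩ := hcop
    intro h0
    have := congrArg (fun p => eval β (p.map φ)) huv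
    simp only [Polynomial.map_add, Polynomial.map_mul, Polynomial.map_one, eval_add, eval_mul,
      eval_one, hβ.eq_zero, h0, mul_zero, add_zero] at this
    exact one_ne_zero this.symm
  -- H separable; factor map H = (X - C β) * G with G(β) ≠ 0
  have hsep : H.Separable := PerfectField.separable_of_irreducible hH
  obtain ⟨G, hG⟩ := (dvd_iff_isRoot).mpr hβ
  have hGβ : eval β G ≠ 0 := by
    obtain ⟨u, v, huv⟩ := hsep
    have h1 : eval β (map φ (derivative H)) ≠ 0 := by
      intro h0
      have := congrArg (fun p => eval β (p.map φ)) huv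
      simp only [Polynomial.map_add, Polynomial.map_mul, Polynomial.map_one, eval_add, eval_mul,
        eval_one, hβ.eq_zero, h0, mul_zero, add_zero] at this
      exact one_ne_zero this.symm
    have h2 : map φ (derivative H) = derivative (H.map φ) := (derivative_map H φ).symm
    rw [h2, hG, derivative_mul, derivative_sub, derivative_X, derivative_C, sub_zero,
      one_mul] at h1
    intro h0
    apply h1
    simp [h0, hG]
  -- the shifted polynomial P
  set Cmap : L[X] := Cpoly.map φ with hCmap
  set P : L[X] := Cmap.comp (X + C β) with hP
  have hXsub : ((X : L[X]) - C β).comp (X + C β) = X := by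
    simp [sub_comp]
  have hXadd : ((X : L[X]) + C β).comp (X - C β) = X := by
    simp [add_comp]
  -- X^μ ∣ P
  have hCmfac : Cmap = ((X - C β) * G) ^ μ * D.map φ := by
    rw [hCmap, hD, Polynomial.map_mul, Polynomial.map_pow, hG]
  have hXdvd : X ^ μ ∣ P := by
    refine ⟨(G ^ μ * D.map φ).comp (X + C β), ?_⟩
    rw [hP, hCmfac, mul_pow, mul_assoc, mul_comp, pow_comp, hXsub]
  -- ¬ X^(μ+1) ∣ P
  have hXndvd : ¬ X ^ (μ + 1) ∣ P := by
    intro ⟨S, hS⟩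
    have hback : Cmap = (X - C β) ^ (μ + 1) * S.comp (X - C β) := by
      have : Cmap = P.comp (X - C β) := by
        rw [hP, comp_assoc, hXadd, comp_X]
      rw [this, hS, mul_comp, pow_comp, X_comp]
    have hkey : (X - C β) ^ μ * (X - C β) ∣ (X - C β) ^ μ * (G ^ μ * D.map φ) := by
      rw [← pow_succ, ← mul_assoc, ← mul_pow, ← hCmfac]
      exact ⟨S.comp (X - C β), hback⟩
    have hdv : (X - C β) ∣ G ^ μ * D.map φ :=
      (mul_dvd_mul_iff_left (pow_ne_zero μ (X_sub_C_ne_zero β))).mp hkey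
    have := (dvd_iff_isRoot).mp hdv
    simp only [IsRoot, eval_mul, eval_pow] at this
    exact (mul_ne_zero (pow_ne_zero _ hGβ) hDβ) this
  -- the nonzero coefficient of P at μ
  have hcoeffμ : P.coeff μ ≠ 0 := by
    rw [X_pow_dvd_iff] at hXdvd hXndvd
    push_neg at hXndvd
    obtain ⟨d, hd, hdne⟩ := hXndvd
    have : d = μ := by
      by_contra h
      exact hdne (hXdvd d (by omega))
    rwa [this] at hdne
  -- characteristic setup
  set p : ℕ := ringChar F with hpdef
  haveI hpF : CharP F p := ringChar.charP F
  obtain ⟨n, hpp, hcard⟩ := FiniteField.card F p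
  haveI : Fact p.Prime := ⟨hpp⟩
  haveI hpL : CharP L p := charP_of_injective_algebraMap (algebraMap F L).injective p
  have hqpn : q = p ^ (n : ℕ) := by rw [← hq, hcard]
  -- Frobenius identity
  have hfrob : ((X : L[X]) + C β) ^ q = X ^ q + C (β ^ q) := by
    rw [hqpn, add_pow_char_pow, ← C_pow]
  set c : L := β ^ q - β with hc
  have hΛ : (((X : L[X]) ^ q - X)).comp (X + C β) = X ^ q - X + C c := by
    rw [sub_comp, pow_comp, X_comp, hfrob, hc, C_sub]
    ring
  -- expansion of P
  set A : ℕ → L[X] := fun i => ((Ci i).map φ).comp (X + C β) with hA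
  have hPsum : P = ∑ i ∈ Finset.range t, A i * ((X : L[X]) ^ q - X + C c) ^ i := by
    rw [hP, hCmap, hC]
    rw [Polynomial.map_sum, sum_comp]
    refine Finset.sum_congr rfl fun i _ => ?_
    rw [Polynomial.map_mul, Polynomial.map_pow, Polynomial.map_sub, Polynomial.map_pow,
      map_X, mul_comp, pow_comp, hΛ]
  -- degree bound on A i
  have hAdeg : ∀ i a, (A i).coeff a ≠ 0 → a ≤ k := by
    intro i a ha
    have h1 : a ≤ (A i).natDegree := le_natDegree_of_ne_zero ha
    have h2 : (A i).natDegree ≤ ((Ci i).map φ).natDegree * ((X : L[X]) + C β).natDegree :=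
      natDegree_comp_le
    have h3 : ((Ci i).map φ).natDegree ≤ (Ci i).natDegree := natDegree_map_le
    have h4 : (Ci i).natDegree ≤ k := natDegree_le_iff_degree_le.mpr (hCi i)
    rw [natDegree_X_add_C] at h2
    omega
  -- the coefficient of P at μ vanishes: contradiction
  apply hcoeffμ
  rw [hPsum, finset_sum_coeff]
  refine Finset.sum_eq_zero fun i hi => ?_
  rw [coeff_mul]
  refine Finset.sum_eq_zero fun ab hab => ?_
  obtain ⟨a, b⟩ := ab
  have habμ : a + b = μ := Finset.HasAntidiagonal.mem_antidiagonal.mp hab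
  by_contra hne
  have ha : (A i).coeff a ≠ 0 := fun h => hne (by simp [h])
  have hb : ((((X : L[X]) ^ q - X + C c)) ^ i).coeff b ≠ 0 := fun h => hne (by simp [h])
  have hak : a ≤ k := hAdeg i a ha
  obtain ⟨s, m, hsm, hbsm⟩ := pow_lam_support q c i b hb
  have hit : i ≤ t - 1 := by
    have := Finset.mem_range.mp hi
    omega
  have ham : a + m ≤ k + t - 1 := by omega
  have hmod : μ % q = a + m := by
    have h1 : μ = (a + m) + q * s := by omega
    rw [h1, Nat.add_mul_mod_self_left, Nat.mod_eq_of_lt (by omega)]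
  omega
end

section
/- Let q = 2^b be a power of 2, let g(X) ∈ 𝔽_q[X] have degree at most d, and let G(X) = Σ_{i=0}^{b−1} g(X)^{2^i}. Let ℓ ≥ 1 be an integer and write ℓ = 2^s·(2s'+1) with s, s' ≥ 0. Then the ℓ-th Hasse derivative of G satisfies G^{[ℓ]}(X) = Σ_{i=0}^{min(s, b−1)} (g^{[ℓ/2^i]}(X))^{2^i}, and in particular G^{[ℓ]}(X) has degree at most d·2^s ≤ d·ℓ. -/
/-!
In characteristic `p` the map `f ↦ f ^ p` is additive and Lucas' theorem gives
`(p n).choose (p k) ≡ n.choose k` and `p ∣ (p n).choose k` for `p ∤ k`, so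
`(f ^ p)^{[k]} = (f^{[k / p]}) ^ p` when `p ∣ k` and `0` otherwise. Iterating, the summand
`g ^ 2 ^ i` of `G` contributes to `G^{[ℓ]}` exactly when `2 ^ i ∣ ℓ`, i.e. when `i ≤ s`.
-/

open Polynomial

section CharP

variable {R : Type*} [CommRing R] (p : ℕ) [hp : Fact p.Prime] [CharP R p]

theorem natCast_pow_char (c : ℕ) : (c : R) ^ p = c := by
  simpa only [frobenius_def] using map_natCast (frobenius R p) c

theorem natCast_choose_mul_mul (n k : ℕ) : ((p * n).choose (p * k) : R) = n.choose k := by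
  apply CharP.natCast_eq_natCast' R p
  simpa [Nat.mul_div_cancel_left _ hp.out.pos] using
    Choose.choose_modEq_choose_mod_mul_choose_div_nat (p := p) (n := p * n) (k := p * k)

theorem natCast_choose_eq_zero_of_dvd_of_not_dvd {n k : ℕ} (hn : p ∣ n) (hk : ¬p ∣ k) :
    (n.choose k : R) = 0 := by
  have hk0 : 0 < k % p := Nat.pos_of_ne_zero fun h => hk (Nat.dvd_of_mod_eq_zero h)
  have h := Choose.choose_modEq_choose_mod_mul_choose_div_nat (p := p) (n := n) (k := k)
  rw [Nat.mod_eq_zero_of_dvd hn, Nat.choose_eq_zero_of_lt hk0, zero_mul] at h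
  exact (CharP.cast_eq_zero_iff R p _).mpr (Nat.modEq_zero_iff_dvd.mp h)

theorem coeff_pow_char (f : R[X]) (m : ℕ) :
    (f ^ p).coeff m = if p ∣ m then f.coeff (m / p) ^ p else 0 := by
  rw [← map_frobenius_expand p f, coeff_map, coeff_expand hp.out.pos]
  split_ifs <;> simp [frobenius_def, hp.out.ne_zero]

theorem hasseDeriv_pow_char (f : R[X]) (k : ℕ) :
    hasseDeriv k (f ^ p) = if p ∣ k then hasseDeriv (k / p) f ^ p else 0 := by
  ext n
  rw [hasseDeriv_coeff, coeff_pow_char]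
  by_cases hk : p ∣ k
  · obtain ⟨c, rfl⟩ := hk
    rw [if_pos (dvd_mul_right p c), coeff_pow_char, Nat.mul_div_cancel_left c hp.out.pos]
    by_cases hn : p ∣ n
    · obtain ⟨m, rfl⟩ := hn
      rw [← mul_add, if_pos (dvd_mul_right p _), if_pos (dvd_mul_right p m),
        Nat.mul_div_cancel_left _ hp.out.pos, Nat.mul_div_cancel_left _ hp.out.pos,
        hasseDeriv_coeff, mul_pow, natCast_choose_mul_mul, natCast_pow_char]
    · rw [if_neg (fun h => hn ((Nat.dvd_add_left (dvd_mul_right p c)).mp h)), if_neg hn, mul_zero]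
  · rw [if_neg hk, coeff_zero]
    split_ifs with hnk
    · rw [natCast_choose_eq_zero_of_dvd_of_not_dvd p hnk hk, zero_mul]
    · rw [mul_zero]

theorem hasseDeriv_pow_char_pow (f : R[X]) (i k : ℕ) :
    hasseDeriv k (f ^ p ^ i) = if p ^ i ∣ k then hasseDeriv (k / p ^ i) f ^ p ^ i else 0 := by
  induction i generalizing k with
  | zero => simp
  | succ i ih =>
    rw [pow_succ, pow_mul, hasseDeriv_pow_char, ih]
    by_cases hk : p ∣ k
    · have hdvd : p ^ i ∣ k / p ↔ p ^ i * p ∣ k := by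
        rw [Nat.dvd_div_iff_mul_dvd hk, mul_comm]
      simp only [if_pos hk, hdvd, Nat.div_div_eq_div_mul, mul_comm p]
      split_ifs
      · rw [pow_mul]
      · exact zero_pow hp.out.ne_zero
    · rw [if_neg hk, if_neg (fun h => hk ((dvd_mul_left p _).trans h))]

theorem hasseDeriv_sum_pow_char_pow (f : R[X]) (b k : ℕ) :
    hasseDeriv k (∑ i ∈ Finset.range b, f ^ p ^ i) =
      ∑ i ∈ (Finset.range b).filter (p ^ · ∣ k), hasseDeriv (k / p ^ i) f ^ p ^ i := by
  simp only [map_sum, hasseDeriv_pow_char_pow, Finset.sum_filter]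

end CharP

theorem Nat.Prime.pow_dvd_pow_mul_iff_le {p m i s : ℕ} (hp : p.Prime) (hm : ¬p ∣ m) :
    p ^ i ∣ p ^ s * m ↔ i ≤ s := by
  rw [Nat.Coprime.dvd_mul_right ((hp.coprime_iff_not_dvd.mpr hm).pow_left i),
    Nat.pow_dvd_pow_iff_le_right hp.one_lt]

theorem stmt4_general {F : Type*} [Field F] [Fintype F] (b : ℕ) (hq : Fintype.card F = 2 ^ b)
    (d : ℕ) (g : F[X]) (hg : g.degree ≤ (d : ℕ))
    (G : F[X]) (hG : G = ∑ i ∈ Finset.range b, g ^ 2 ^ i)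
    (ℓ s s' : ℕ) (hℓ : ℓ = 2 ^ s * (2 * s' + 1)) :
    hasseDeriv ℓ G = ∑ i ∈ Finset.range (min s (b - 1) + 1), (hasseDeriv (ℓ / 2 ^ i) g) ^ 2 ^ i
      ∧ (hasseDeriv ℓ G).degree ≤ ((d * 2 ^ s : ℕ) : WithBot ℕ)
      ∧ d * 2 ^ s ≤ d * ℓ := by
  have : Fact (Nat.Prime 2) := ⟨Nat.prime_two⟩
  have : CharP F 2 := charP_of_card_eq_prime_pow hq
  have hb : b ≠ 0 := by
    rintro rfl
    exact (Fintype.one_lt_card (α := F)).ne' hq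
  have hindex : (Finset.range b).filter (2 ^ · ∣ ℓ) = Finset.range (min s (b - 1) + 1) := by
    ext i
    simp only [Finset.mem_filter, Finset.mem_range, hℓ,
      Nat.prime_two.pow_dvd_pow_mul_iff_le (by omega : ¬2 ∣ 2 * s' + 1)]
    omega
  have hformula := hG ▸ hindex ▸ hasseDeriv_sum_pow_char_pow 2 g b ℓ
  refine ⟨hformula, ?_, Nat.mul_le_mul_left d (hℓ ▸ Nat.le_mul_of_pos_right _ (by omega))⟩
  rw [hformula, ← natDegree_le_iff_degree_le]
  refine natDegree_sum_le_of_forall_le _ _ fun i hi => ?_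
  have hig : (hasseDeriv (ℓ / 2 ^ i) g).natDegree ≤ d :=
    (natDegree_hasseDeriv_le _ _).trans ((Nat.sub_le _ _).trans (natDegree_le_iff_degree_le.mpr hg))
  calc (hasseDeriv (ℓ / 2 ^ i) g ^ 2 ^ i).natDegree
      ≤ 2 ^ i * (hasseDeriv (ℓ / 2 ^ i) g).natDegree := natDegree_pow_le
    _ ≤ 2 ^ s * d := by
      gcongr
      · norm_num
      · rw [Finset.mem_range] at hi; omega
    _ = d * 2 ^ s := mul_comm _ _

/-- Let `q = 2^b`, `g ∈ 𝔽_q[X]` of degree at most `d`, and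
`G = Σ_{i<b} g^(2^i)`. Let `ℓ = 2^s·(2s'+1) ≥ 1`. Then
`G^{[ℓ]} = Σ_{i=0}^{min(s,b-1)} (g^{[ℓ/2^i]})^(2^i)`, and in particular `G^{[ℓ]}` has
degree at most `d·2^s ≤ d·ℓ`. -/
theorem stmt4 {F : Type*} [Field F] [Fintype F] (b : ℕ) (hq : Fintype.card F = 2 ^ b)
    (d : ℕ) (g : F[X]) (hg : g.degree ≤ (d : ℕ))
    (G : F[X]) (hG : G = ∑ i ∈ Finset.range b, g ^ 2 ^ i)
    (ℓ s s' : ℕ) (hℓ1 : 1 ≤ ℓ) (hℓ : ℓ = 2 ^ s * (2 * s' + 1)) :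
    hasseDeriv ℓ G = ∑ i ∈ Finset.range (min s (b - 1) + 1), (hasseDeriv (ℓ / 2 ^ i) g) ^ 2 ^ i
      ∧ (hasseDeriv ℓ G).degree ≤ ((d * 2 ^ s : ℕ) : WithBot ℕ)
      ∧ d * 2 ^ s ≤ d * ℓ :=
  stmt4_general b hq d g hg G hG ℓ s s' hℓ
end

section
/- Let q be a prime power and let A(X), B(X) ∈ 𝔽_q[X]. If A has pseudodegree at most k₁ and B has pseudodegree at most k₂, then the product A(X)·B(X) has pseudodegree at most k₁ + k₂. -/
/-! Leibniz' rule `(AB)^[ℓ] = ∑_{i+j=ℓ} A^[i] B^[j]` reduces the claim to a single product, and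
the remainder of `fg` is the remainder of `(f mod Λ)(g mod Λ)`, whose degree is at most
`deg (f mod Λ) + deg (g mod Λ)`. -/

open Polynomial

/-- `A ∈ 𝔽_q[X]` has pseudodegree at most `k`: for every `ℓ ≥ 0`, the remainder of the
`ℓ`-th Hasse derivative of `A` upon division by `Λ(X) = X^q - X` has degree at most `k`. -/
def PdegLE {F : Type*} [Field F] (q : ℕ) (A : F[X]) (k : ℕ) : Prop :=
  ∀ ℓ : ℕ, ((hasseDeriv ℓ A) %ₘ (X ^ q - X)).degree ≤ (k : WithBot ℕ)

lemma degree_mul_modByMonic_le {R : Type*} [CommRing R] {p f g : R[X]} {k₁ k₂ : ℕ}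
    (hf : (f %ₘ p).degree ≤ k₁) (hg : (g %ₘ p).degree ≤ k₂) :
    ((f * g) %ₘ p).degree ≤ ((k₁ + k₂ : ℕ) : WithBot ℕ) := by
  rw [mul_modByMonic, Nat.cast_add]
  calc ((f %ₘ p) * (g %ₘ p) %ₘ p).degree
      ≤ ((f %ₘ p) * (g %ₘ p)).degree := degree_modByMonic_le_left
    _ ≤ (f %ₘ p).degree + (g %ₘ p).degree := degree_mul_le _ _
    _ ≤ k₁ + k₂ := add_le_add hf hg

theorem stmt5_general {F : Type*} [Field F] (q : ℕ)
    (A B : F[X]) (k₁ k₂ : ℕ)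
    (hA : PdegLE q A k₁) (hB : PdegLE q B k₂) :
    PdegLE q (A * B) (k₁ + k₂) := by
  intro ℓ
  rw [hasseDeriv_mul, ← modByMonicHom_apply, map_sum]
  refine (degree_sum_le _ _).trans (Finset.sup_le fun ij _ => ?_)
  exact degree_mul_modByMonic_le (hA ij.1) (hB ij.2)

/-- If `A` has pseudodegree at most `k₁` and `B` has pseudodegree at most
`k₂`, then `A·B` has pseudodegree at most `k₁ + k₂`. -/
theorem stmt5 {F : Type*} [Field F] [Fintype F] (q : ℕ) (hq : Fintype.card F = q)
    (A B : F[X]) (k₁ k₂ : ℕ)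
    (hA : PdegLE q A k₁) (hB : PdegLE q B k₂) :
    PdegLE q (A * B) (k₁ + k₂) :=
  stmt5_general q A B k₁ k₂ hA hB
end

section
/- Let q be a prime power, let A(X) ∈ 𝔽_q[X], and write A(X) = Σ_{i≥0} A_i(X)·Λ(X)^i where Λ(X) = X^q − X and each A_i(X) ∈ 𝔽_q[X] has degree strictly less than q (the base-Λ expansion of A, which exists and is unique). Then for every integer k ≥ 0: A has pseudodegree at most k if and only if every A_i has degree at most k. -/
/-!
As `q` is a power of the characteristic, `Λ(X + Z) = Λ(X) + Λ(Z)`, and the congruence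
`f(X + Z) ≡ f(Z) (mod Λ(X))` passes to all powers of `Λ`. Expanding
`A(X + Z) = Σ_i A_i(X + Z) Λ(X + Z)^i` modulo `Λ(X)` shows that the remainder of `A^{[ℓ]}`
modulo `Λ` is `Σ_i Σ_{s + m = ℓ} A_i^{[s]} · [X^m] Λ^i`: it already has degree `< q`, so no
further reduction happens, and its degree is at most `max_i deg A_i`.

Conversely, take `ℓ = i q`. The exponents of `Λ^j` are `j + t (q - 1)` with `t ≤ j`, so a summand
with `j ≤ i` and `s < q - 1` must have `j = i`, `s = 0`. Hence, once `deg A_j ≤ k` is known for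
all `j > i`, the coefficient of `X^d`, `d > k`, in this remainder is that of `A_i`, and downward
induction on `i` concludes.
-/

open Polynomial

open Finset

section TaylorConstMod

variable {R : Type*} [CommRing R] {P f g : R[X]}

/-- `f(X + Z) ≡ f(Z)` modulo `P(X)`, read coefficientwise in `Z`. -/
def TaylorConstMod (P f : R[X]) : Prop :=
  ∀ m, P ∣ hasseDeriv m f - C (f.coeff m)

theorem taylorConstMod_one : TaylorConstMod P 1 := by
  intro m
  rcases Nat.eq_zero_or_pos m with rfl | hm
  · simp
  · simp [hasseDeriv_apply_one (k := m) hm, coeff_one, hm.ne']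

theorem TaylorConstMod.mul (hf : TaylorConstMod P f) (hg : TaylorConstMod P g) :
    TaylorConstMod P (f * g) := by
  intro m
  rw [hasseDeriv_mul, coeff_mul, map_sum, ← sum_sub_distrib]
  refine dvd_sum fun x _ => ?_
  have hsplit : hasseDeriv x.1 f * hasseDeriv x.2 g - C (f.coeff x.1 * g.coeff x.2) =
      hasseDeriv x.1 f * (hasseDeriv x.2 g - C (g.coeff x.2)) +
        (hasseDeriv x.1 f - C (f.coeff x.1)) * C (g.coeff x.2) := by
    rw [map_mul]; ring
  rw [hsplit]
  exact dvd_add (dvd_mul_of_dvd_right (hg _) _) (dvd_mul_of_dvd_left (hf _) _)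

theorem TaylorConstMod.pow (hf : TaylorConstMod P f) (j : ℕ) : TaylorConstMod P (f ^ j) := by
  induction j with
  | zero => exact pow_zero f ▸ taylorConstMod_one
  | succ j ih => exact pow_succ f j ▸ ih.mul hf

theorem degree_hasseDeriv_le (f : R[X]) (m : ℕ) : (hasseDeriv m f).degree ≤ f.degree := by
  rcases eq_or_ne f 0 with rfl | hf
  · simp
  · calc (hasseDeriv m f).degree ≤ (hasseDeriv m f).natDegree := degree_le_natDegree
      _ ≤ f.natDegree := mod_cast (natDegree_hasseDeriv_le f m).trans (Nat.sub_le _ _)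
      _ = f.degree := (degree_eq_natDegree hf).symm

theorem hasseDeriv_sum_mul_pow_modByMonic [Nontrivial R] (hmonic : P.Monic)
    (hP : TaylorConstMod P P) {Ai : ℕ → R[X]} (hdeg : ∀ j, (Ai j).degree < P.degree) (n ℓ : ℕ) :
    hasseDeriv ℓ (∑ j ∈ range n, Ai j * P ^ j) %ₘ P =
      ∑ j ∈ range n, ∑ x ∈ antidiagonal ℓ, hasseDeriv x.1 (Ai j) * C ((P ^ j).coeff x.2) := by
  set rem := ∑ j ∈ range n, ∑ x ∈ antidiagonal ℓ, hasseDeriv x.1 (Ai j) * C ((P ^ j).coeff x.2)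
  have hdvd : P ∣ hasseDeriv ℓ (∑ j ∈ range n, Ai j * P ^ j) - rem := by
    simp only [rem, map_sum, hasseDeriv_mul, ← sum_sub_distrib, ← mul_sub]
    exact dvd_sum fun j _ => dvd_sum fun x _ => dvd_mul_of_dvd_right (hP.pow j x.2) _
  have hbot : ⊥ < P.degree := bot_lt_iff_ne_bot.2 (degree_ne_bot.2 hmonic.ne_zero)
  have hlt : rem.degree < P.degree := by
    refine (degree_sum_le _ _).trans_lt ((Finset.sup_lt_iff hbot).2 fun j _ => ?_)
    refine (degree_sum_le _ _).trans_lt ((Finset.sup_lt_iff hbot).2 fun x _ => ?_)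
    rw [mul_comm, ← smul_eq_C_mul]
    exact (degree_smul_le _ _).trans_lt ((degree_hasseDeriv_le _ _).trans_lt (hdeg j))
  rw [modByMonic_eq_of_dvd_sub hmonic hdvd, (modByMonic_eq_self_iff hmonic).2 hlt]

theorem coeff_hasseDeriv_sum_mul_pow_modByMonic [Nontrivial R] (hmonic : P.Monic)
    (hP : TaylorConstMod P P) {Ai : ℕ → R[X]} (hdeg : ∀ j, (Ai j).degree < P.degree) (n ℓ d : ℕ) :
    (hasseDeriv ℓ (∑ j ∈ range n, Ai j * P ^ j) %ₘ P).coeff d =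
      ∑ j ∈ range n, ∑ x ∈ antidiagonal ℓ,
        ((d + x.1).choose x.1 : R) * (Ai j).coeff (d + x.1) * (P ^ j).coeff x.2 := by
  simp only [hasseDeriv_sum_mul_pow_modByMonic hmonic hP hdeg, finsetSum_coeff, coeff_mul_C,
    hasseDeriv_coeff]

end TaylorConstMod

section FrobeniusPolynomial

variable {R : Type*} [CommRing R]

theorem hasseDeriv_X_pow_char_pow (p : ℕ) [Fact p.Prime] [CharP R p] (e : ℕ) {m : ℕ}
    (hm : m ≠ 0) : hasseDeriv m (X ^ p ^ e : R[X]) = C ((X ^ p ^ e : R[X]).coeff m) := by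
  rw [X_pow_eq_monomial, hasseDeriv_monomial, coeff_monomial]
  by_cases hme : p ^ e = m
  · simp [hme]
  · have hchoose : ((p ^ e).choose m : R) = 0 :=
      (CharP.cast_eq_zero_iff R p _).2 ((Fact.out : p.Prime).dvd_choose_pow hm (Ne.symm hme))
    simp [hme, hchoose]

theorem taylorConstMod_X_pow_char_pow_sub_X (p : ℕ) [Fact p.Prime] [CharP R p] (e : ℕ) :
    TaylorConstMod (X ^ p ^ e - X : R[X]) (X ^ p ^ e - X) := by
  intro m
  rcases eq_or_ne m 0 with rfl | hm
  · simp [(pow_pos (Fact.out : p.Prime).pos e).ne]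
  · have hX := hasseDeriv_X_pow_char_pow (R := R) p 0 hm
    rw [pow_zero, pow_one] at hX
    rw [map_sub, hasseDeriv_X_pow_char_pow p e hm, hX, coeff_sub, C_sub, sub_self]
    exact dvd_zero _

variable {q : ℕ}

theorem degree_X_pow_sub_X [Nontrivial R] (hq : 1 < q) : (X ^ q - X : R[X]).degree = q := by
  rw [degree_sub_eq_left_of_degree_lt] <;> rw [degree_X_pow]
  rw [degree_X]
  exact_mod_cast hq

theorem monic_X_pow_sub_X (hq : 1 < q) : (X ^ q - X : R[X]).Monic := by
  nontriviality R
  exact monic_X_pow_sub (by rw [degree_X]; exact_mod_cast hq)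

theorem coeff_X_pow_sub_X_pow_mul [Nontrivial R] (hq : 1 < q) (i : ℕ) :
    ((X ^ q - X : R[X]) ^ i).coeff (i * q) = 1 := by
  have hnat : ((X ^ q - X : R[X]) ^ i).natDegree = i * q := by
    rw [(monic_X_pow_sub_X hq).natDegree_pow,
      natDegree_eq_of_degree_eq_some (degree_X_pow_sub_X hq)]
  rw [← hnat]
  exact ((monic_X_pow_sub_X hq).pow i).coeff_natDegree

theorem exists_eq_add_mul_of_coeff_X_pow_sub_X_pow_ne_zero (hq : 1 < q) {j m : ℕ}
    (h : ((X ^ q - X : R[X]) ^ j).coeff m ≠ 0) : ∃ t ≤ j, m = j + t * (q - 1) := by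
  have hfactor : (X ^ q - X : R[X]) ^ j = expand R (q - 1) ((X - 1) ^ j) * X ^ j := by
    rw [map_pow, map_sub, expand_X, map_one, ← mul_pow, sub_one_mul, ← pow_succ,
      Nat.sub_add_cancel hq.le]
  rw [hfactor, coeff_mul_X_pow', coeff_expand (by omega)] at h
  split_ifs at h with hjm hdvd
  · obtain ⟨t, ht⟩ := hdvd
    refine ⟨t, ?_, by rw [mul_comm]; omega⟩
    have hle := le_natDegree_of_ne_zero h
    rw [ht, Nat.mul_div_cancel_left _ (by omega)] at hle
    exact hle.trans (natDegree_pow_le_of_le j (natDegree_X_sub_C_le 1)) |>.trans_eq (mul_one j)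
  all_goals exact absurd rfl h

theorem eq_and_eq_zero_of_coeff_X_pow_sub_X_pow_ne_zero (hq : 1 < q) {i j s m : ℕ}
    (h : ((X ^ q - X : R[X]) ^ j).coeff m ≠ 0) (hji : j ≤ i) (hsm : s + m = i * q)
    (hs : s + 1 < q) : j = i ∧ s = 0 := by
  obtain ⟨t, htj, hm⟩ := exists_eq_add_mul_of_coeff_X_pow_sub_X_pow_ne_zero hq h
  obtain ⟨u, rfl⟩ : ∃ u, q = u + 1 := ⟨q - 1, by omega⟩
  rw [Nat.add_sub_cancel] at hm
  have hti : t = i := by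
    by_contra hne
    nlinarith [Nat.mul_le_mul_right u (show t + 1 ≤ i by omega)]
  subst hti
  constructor <;> nlinarith

theorem sum_choose_mul_coeff_X_pow_sub_X_pow [Nontrivial R] (hq : 1 < q) {Ai : ℕ → R[X]}
    (hdeg : ∀ j, (Ai j).degree < q) {n i d : ℕ} (hi : i < n) (hd : 0 < d)
    (hhigh : ∀ j, i < j → (Ai j).degree < d) :
    ∑ j ∈ range n, ∑ x ∈ antidiagonal (i * q), ((d + x.1).choose x.1 : R) *
      (Ai j).coeff (d + x.1) * ((X ^ q - X : R[X]) ^ j).coeff x.2 = (Ai i).coeff d := by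
  have hvanish : ∀ j, ∀ x ∈ antidiagonal (i * q), ¬(j = i ∧ x = (0, i * q)) →
      ((d + x.1).choose x.1 : R) * (Ai j).coeff (d + x.1) *
        ((X ^ q - X : R[X]) ^ j).coeff x.2 = 0 := by
    rintro j ⟨s, m⟩ hsm hne
    rw [HasAntidiagonal.mem_antidiagonal] at hsm
    by_contra hterm
    have hA : (Ai j).coeff (d + s) ≠ 0 := fun h => hterm (by rw [h]; ring)
    have hΛ : ((X ^ q - X : R[X]) ^ j).coeff m ≠ 0 := fun h => hterm (by rw [h]; ring)
    have hds : d + s < q := by exact_mod_cast (le_degree_of_ne_zero hA).trans_lt (hdeg j)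
    have hji : j ≤ i := by
      by_contra! hij
      exact hA (coeff_eq_zero_of_degree_lt
        ((hhigh j hij).trans_le (by exact_mod_cast le_self_add)))
    obtain ⟨rfl, rfl⟩ := eq_and_eq_zero_of_coeff_X_pow_sub_X_pow_ne_zero hq hΛ hji hsm (by omega)
    exact hne ⟨rfl, by rw [← hsm, zero_add]⟩
  rw [sum_eq_single_of_mem i (mem_range.2 hi) fun j _ hj =>
      sum_eq_zero fun x hx => hvanish j x hx fun h => hj h.1,
    sum_eq_single_of_mem (0, i * q) (by simp) fun x hx hx0 => hvanish i x hx fun h => hx0 h.2]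
  simp [coeff_X_pow_sub_X_pow_mul hq]

end FrobeniusPolynomial

section PseudoDegree

variable {F : Type*} [Field F] {q : ℕ}

theorem pdegLE_sum_mul_pow_of_degree_le (hq : 1 < q)
    (hΛ : TaylorConstMod (X ^ q - X : F[X]) (X ^ q - X))
    {Ai : ℕ → F[X]} (hdeg : ∀ i, (Ai i).degree < q) (n k : ℕ)
    (hk : ∀ i, (Ai i).degree ≤ k) : PdegLE q (∑ i ∈ range n, Ai i * (X ^ q - X) ^ i) k := by
  intro ℓ
  rw [degree_le_iff_coeff_zero]
  intro d hd
  rw [coeff_hasseDeriv_sum_mul_pow_modByMonic (monic_X_pow_sub_X hq) hΛ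
    (fun j => (hdeg j).trans_eq (degree_X_pow_sub_X hq).symm)]
  refine sum_eq_zero fun j _ => sum_eq_zero fun x _ => ?_
  rw [coeff_eq_zero_of_degree_lt ((hk j).trans_lt (hd.trans_le (by exact_mod_cast le_self_add))),
    mul_zero, zero_mul]

theorem degree_le_of_pdegLE_sum_mul_pow (hq : 1 < q)
    (hΛ : TaylorConstMod (X ^ q - X : F[X]) (X ^ q - X))
    {Ai : ℕ → F[X]} (hdeg : ∀ i, (Ai i).degree < q) {n k : ℕ} (hsupp : ∀ i, n ≤ i → Ai i = 0)
    (h : PdegLE q (∑ i ∈ range n, Ai i * (X ^ q - X) ^ i) k) (i : ℕ) : (Ai i).degree ≤ k := by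
  refine Nat.strong_decreasing_induction ⟨n, fun j hj => by simp [hsupp j hj.le]⟩
    (fun i ih => ?_) i
  rcases le_or_gt n i with hni | hin
  · simp [hsupp i hni]
  rw [degree_le_iff_coeff_zero]
  intro d hd
  have hkd : k < d := by exact_mod_cast hd
  rw [← sum_choose_mul_coeff_X_pow_sub_X_pow hq hdeg hin (by omega)
      fun j hj => (ih j hj).trans_lt hd,
    ← coeff_hasseDeriv_sum_mul_pow_modByMonic (monic_X_pow_sub_X hq) hΛ
      (fun j => (hdeg j).trans_eq (degree_X_pow_sub_X hq).symm)]
  exact coeff_eq_zero_of_degree_lt ((h (i * q)).trans_lt hd)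

end PseudoDegree

/-- Write `A = Σ_i A_i · Λ^i` (base-`Λ` expansion, each `deg(A_i) < q`).
Then for every `k ≥ 0`: `A` has pseudodegree at most `k` iff every `A_i` has degree at
most `k`. -/
theorem stmt6 {F : Type*} [Field F] [Fintype F] (q : ℕ) (hq : Fintype.card F = q)
    (A : F[X]) (Ai : ℕ → F[X]) (n : ℕ)
    (hdeg : ∀ i, (Ai i).degree < (q : ℕ))
    (hsupp : ∀ i, n ≤ i → Ai i = 0)
    (hA : A = ∑ i ∈ Finset.range n, Ai i * (X ^ q - X) ^ i)
    (k : ℕ) :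
    PdegLE q A k ↔ ∀ i, (Ai i).degree ≤ (k : WithBot ℕ) := by
  obtain ⟨p, _⟩ := CharP.exists F
  obtain ⟨e, hp, hcard⟩ := FiniteField.card F p
  have : Fact p.Prime := ⟨hp⟩
  have hq1 : 1 < q := hq ▸ Fintype.one_lt_card
  have hΛ : TaylorConstMod (X ^ q - X : F[X]) (X ^ q - X) := by
    rw [← hq, hcard]
    exact taylorConstMod_X_pow_char_pow_sub_X p e
  subst hA
  exact ⟨degree_le_of_pdegLE_sum_mul_pow hq1 hΛ hdeg hsupp,
    pdegLE_sum_mul_pow_of_degree_le hq1 hΛ hdeg n k⟩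
end

section
/- Let q be a prime power and let A(X) ∈ 𝔽_q[X] have pseudodegree at most k and degree at most D. Then there exist polynomials Â_0(X), Â_1(X), …, Â_{⌊D/q⌋}(X) ∈ 𝔽_q[X], each of degree at most k + ⌊D/q⌋, such that A(X) = Σ_{i=0}^{⌊D/q⌋} Â_i(X)·X^{iq}. -/
open Polynomial

/-!
Write `Λ = X ^ q - X` and expand `A = ∑ Bᵢ Λ ^ i` in base `Λ`, with `deg Bᵢ < q`. Since `q` is a
power of the characteristic, every Hasse derivative of `Λ` of positive order is a constant, so
modulo `Λ` the Hasse derivatives of `Λ ^ i` are the constants `(Λ ^ i)_b`. Hence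
`A^[ℓ] mod Λ = ∑ᵢ ∑_{a + b = ℓ} (Λ ^ i)_b • Bᵢ^[a]`, the right side already having degree `< q`.
As `(Λ ^ i)_b = 0` for `b < i` and `(Λ ^ i)_i = (-1) ^ i`, this system is triangular, and induction
on `ℓ` gives `deg B_ℓ ≤ k`. Expanding `(X ^ q - X) ^ i` binomially finally regroups `A` as
`∑ⱼ Âⱼ X ^ (j q)` with `Âⱼ = ∑ᵢ (i choose j) (-X) ^ (i - j) Bᵢ`.
-/

open Finset

section

variable {R : Type*} [CommRing R]

theorem degree_hasseDeriv_le_s7 (p : R[X]) (d : ℕ) : (hasseDeriv d p).degree ≤ p.degree := by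
  rcases eq_or_ne p 0 with rfl | hp
  · simp
  calc (hasseDeriv d p).degree ≤ (hasseDeriv d p).natDegree := degree_le_natDegree
    _ ≤ p.natDegree := by exact_mod_cast (natDegree_hasseDeriv_le p d).trans (Nat.sub_le _ _)
    _ = p.degree := (degree_eq_natDegree hp).symm

theorem exists_eq_sum_mul_pow_of_degree_lt [Nontrivial R] {Λ : R[X]} (hΛ : Λ.Monic) (n : ℕ)
    {A : R[X]} (hA : A.degree < ↑(n * Λ.natDegree)) :
    ∃ B : ℕ → R[X], (∀ i, (B i).degree < Λ.degree) ∧ A = ∑ i ∈ range n, B i * Λ ^ i := by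
  induction n generalizing A with
  | zero =>
    refine ⟨0, fun _ => ?_, ?_⟩
    · simp [bot_lt_iff_ne_bot, hΛ.ne_zero]
    · simpa using hA
  | succ n ih =>
    have hdiv : (A /ₘ Λ).degree < ↑(n * Λ.natDegree) := by
      rcases eq_or_ne (A /ₘ Λ) 0 with h | h
      · rw [h, degree_zero]
        exact WithBot.bot_lt_coe _
      have hA0 : A ≠ 0 := by rintro rfl; simp at h
      have hΛA : Λ.natDegree ≤ A.natDegree :=
        natDegree_le_natDegree (not_lt.mp ((divByMonic_eq_zero_iff hΛ).not.mp h))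
      rw [degree_eq_natDegree h, natDegree_divByMonic A hΛ]
      rw [degree_eq_natDegree hA0, Nat.cast_lt, add_mul, one_mul] at hA
      exact_mod_cast (by omega : A.natDegree - Λ.natDegree < n * Λ.natDegree)
    obtain ⟨B, hB, hsum⟩ := ih hdiv
    refine ⟨fun i => Nat.casesOn i (A %ₘ Λ) B, fun i => ?_, ?_⟩
    · cases i
      · exact degree_modByMonic_lt A hΛ
      · exact hB _
    · rw [sum_range_succ', pow_zero, mul_one, add_comm]
      conv_lhs => rw [← modByMonic_add_div A Λ, hsum, mul_sum]
      exact congrArg _ (sum_congr rfl fun i _ => by ring)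

theorem mk_hasseDeriv_mul {M P Q : R[X]}
    (hP : ∀ d, AdjoinRoot.mk M (hasseDeriv d P) = AdjoinRoot.of M (P.coeff d))
    (hQ : ∀ d, AdjoinRoot.mk M (hasseDeriv d Q) = AdjoinRoot.of M (Q.coeff d)) (d : ℕ) :
    AdjoinRoot.mk M (hasseDeriv d (P * Q)) = AdjoinRoot.of M ((P * Q).coeff d) := by
  simp [hasseDeriv_mul, coeff_mul, hP, hQ]

theorem mk_hasseDeriv_pow {M P : R[X]}
    (hP : ∀ d, AdjoinRoot.mk M (hasseDeriv d P) = AdjoinRoot.of M (P.coeff d)) (i d : ℕ) :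
    AdjoinRoot.mk M (hasseDeriv d (P ^ i)) = AdjoinRoot.of M ((P ^ i).coeff d) := by
  induction i generalizing d with
  | zero =>
    rcases eq_or_ne d 0 with rfl | hd
    · simp
    · simp [hasseDeriv_apply_one _ (Nat.pos_of_ne_zero hd), coeff_one, hd]
  | succ i ih => rw [pow_succ]; exact mk_hasseDeriv_mul ih hP d

theorem mk_hasseDeriv_self {Λ : R[X]} (h0 : Λ.coeff 0 = 0)
    (hΛ : ∀ d ≠ 0, hasseDeriv d Λ = C (Λ.coeff d)) (d : ℕ) :
    AdjoinRoot.mk Λ (hasseDeriv d Λ) = AdjoinRoot.of Λ (Λ.coeff d) := by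
  rcases eq_or_ne d 0 with rfl | hd
  · simp [h0]
  · rw [hΛ d hd, AdjoinRoot.mk_C]

theorem mk_hasseDeriv_sum_mul_pow {Λ : R[X]}
    (hΛ : ∀ d, AdjoinRoot.mk Λ (hasseDeriv d Λ) = AdjoinRoot.of Λ (Λ.coeff d))
    (B : ℕ → R[X]) (N ℓ : ℕ) :
    AdjoinRoot.mk Λ (hasseDeriv ℓ (∑ i ∈ range N, B i * Λ ^ i)) =
      AdjoinRoot.mk Λ (∑ i ∈ range N, ∑ ab ∈ antidiagonal ℓ,
        (Λ ^ i).coeff ab.2 • hasseDeriv ab.1 (B i)) := by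
  simp [hasseDeriv_mul, mk_hasseDeriv_pow hΛ, smul_eq_C_mul, mul_comm]

theorem coeff_pow_of_lt {Λ : R[X]} (h0 : Λ.coeff 0 = 0) {i b : ℕ} (hb : b < i) :
    (Λ ^ i).coeff b = 0 := by
  obtain ⟨P, rfl⟩ := X_dvd_iff.mpr h0
  rw [mul_pow, coeff_X_pow_mul', if_neg (by omega)]

theorem coeff_pow_self {Λ : R[X]} (h0 : Λ.coeff 0 = 0) (i : ℕ) :
    (Λ ^ i).coeff i = Λ.coeff 1 ^ i := by
  obtain ⟨P, rfl⟩ := X_dvd_iff.mpr h0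
  rw [mul_pow, coeff_X_pow_mul', if_pos le_rfl, Nat.sub_self, coeff_X_mul, coeff_zero_eq_eval_zero,
    coeff_zero_eq_eval_zero, eval_pow]

theorem hasseDeriv_X_pow_char_pow_sub_X (p : ℕ) [hp : Fact p.Prime] [CharP R p] {n d : ℕ}
    (hd : d ≠ 0) :
    hasseDeriv d (X ^ p ^ n - X : R[X]) = C ((X ^ p ^ n - X : R[X]).coeff d) := by
  ext m
  rw [hasseDeriv_coeff, coeff_C]
  rcases eq_or_ne m 0 with rfl | hm
  · simp
  have hX : (X : R[X]).coeff (m + d) = 0 := coeff_X_of_ne_one (by omega)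
  rw [coeff_sub, hX, sub_zero, coeff_X_pow, if_neg hm]
  split_ifs with hq
  · rw [hq, mul_one, CharP.cast_eq_zero_iff R p]
    exact hp.out.dvd_choose_pow hd (by omega)
  · rw [mul_zero]

theorem hasseDeriv_modByMonic_eq_sum [Nontrivial R] {Λ : R[X]} (hΛ : Λ.Monic)
    (hΛd : ∀ d, AdjoinRoot.mk Λ (hasseDeriv d Λ) = AdjoinRoot.of Λ (Λ.coeff d))
    {B : ℕ → R[X]} (hB : ∀ i, (B i).degree < Λ.degree) (N ℓ : ℕ) :
    hasseDeriv ℓ (∑ i ∈ range N, B i * Λ ^ i) %ₘ Λ =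
      ∑ i ∈ range N, ∑ ab ∈ antidiagonal ℓ, (Λ ^ i).coeff ab.2 • hasseDeriv ab.1 (B i) := by
  rw [modByMonic_eq_of_dvd_sub hΛ (AdjoinRoot.mk_eq_mk.mp (mk_hasseDeriv_sum_mul_pow hΛd B N ℓ)),
    modByMonic_eq_self_iff hΛ, degree_eq_natDegree hΛ.ne_zero, ← mem_degreeLT]
  refine Submodule.sum_mem _ fun i _ => Submodule.sum_mem _ fun ab _ => Submodule.smul_mem _ _ ?_
  rw [mem_degreeLT, ← degree_eq_natDegree hΛ.ne_zero]
  exact (degree_hasseDeriv_le_s7 _ _).trans_lt (hB i)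

theorem sum_mul_sub_X_pow_eq (B : ℕ → R[X]) (Y : R[X]) (N : ℕ) :
    ∑ i ∈ range N, B i * (Y - X) ^ i =
      ∑ j ∈ range N, (∑ i ∈ range N, C ((-1) ^ (i - j) * (i.choose j : R)) * X ^ (i - j) * B i) *
        Y ^ j := by
  have hbinom : ∀ i ∈ range N, (Y - X) ^ i =
      ∑ j ∈ range N, C ((-1) ^ (i - j) * (i.choose j : R)) * X ^ (i - j) * Y ^ j := by
    intro i hi
    rw [sub_eq_add_neg, add_pow]
    refine sum_subset (range_subset_range.mpr (mem_range.mp hi)) (fun j _ hj => ?_) |>.trans ?_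
    · rw [Nat.choose_eq_zero_of_lt (by simpa using hj)]
      simp
    · refine sum_congr rfl fun j _ => ?_
      simp only [map_mul, map_pow, map_neg, map_one, map_natCast, neg_pow (X : R[X])]
      ring
  rw [sum_congr rfl fun i hi => by rw [hbinom i hi]]
  simp_rw [mul_sum, sum_mul]
  rw [sum_comm]
  exact sum_congr rfl fun j _ => sum_congr rfl fun i _ => by ring

theorem exists_eq_sum_mul_X_pow_mul {q m k : ℕ} {B : ℕ → R[X]} (hB : ∀ i ≤ m, (B i).degree ≤ k) :
    ∃ Ahat : ℕ → R[X], (∀ j, (Ahat j).degree ≤ ↑(k + m)) ∧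
      ∑ i ∈ range (m + 1), B i * (X ^ q - X) ^ i = ∑ j ∈ range (m + 1), Ahat j * X ^ (j * q) := by
  refine ⟨fun j => ∑ i ∈ range (m + 1), C ((-1) ^ (i - j) * (i.choose j : R)) * X ^ (i - j) * B i,
    fun j => ?_, by simp_rw [sum_mul_sub_X_pow_eq, pow_mul']⟩
  refine (degree_sum_le _ _).trans (Finset.sup_le fun i hi => ?_)
  have him : i ≤ m := Nat.lt_succ_iff.mp (mem_range.mp hi)
  calc _ ≤ ((i - j : ℕ) : WithBot ℕ) + k :=
        (degree_mul_le _ _).trans (add_le_add (degree_C_mul_X_pow_le _ _) (hB i him))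
    _ ≤ ↑(k + m) := by rw [add_comm]; exact_mod_cast (by omega : k + (i - j) ≤ k + m)

end

theorem degree_le_of_degree_hasseDeriv_modByMonic_le {F : Type*} [Field F] {Λ : F[X]}
    (hΛ : Λ.Monic) (h0 : Λ.coeff 0 = 0) (h1 : Λ.coeff 1 ≠ 0)
    (hΛd : ∀ d, AdjoinRoot.mk Λ (hasseDeriv d Λ) = AdjoinRoot.of Λ (Λ.coeff d))
    {B : ℕ → F[X]} (hB : ∀ i, (B i).degree < Λ.degree) {N k : ℕ}
    (hk : ∀ ℓ, (hasseDeriv ℓ (∑ i ∈ range N, B i * Λ ^ i) %ₘ Λ).degree ≤ k) :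
    ∀ ℓ < N, (B ℓ).degree ≤ k := by
  intro ℓ
  induction ℓ using Nat.strong_induction_on with
  | _ ℓ ih =>
  intro hℓN
  simp_rw [← mem_degreeLE] at ih hk ⊢
  set T : ℕ → F[X] := fun i =>
    ∑ ab ∈ antidiagonal ℓ, (Λ ^ i).coeff ab.2 • hasseDeriv ab.1 (B i)
  have hT_lt : ∀ i < ℓ, T i ∈ degreeLE F k := fun i hi =>
    Submodule.sum_mem _ fun ab _ => Submodule.smul_mem _ _ <| by
      rw [mem_degreeLE]
      exact (degree_hasseDeriv_le_s7 _ _).trans (mem_degreeLE.mp (ih i hi (hi.trans hℓN)))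
  have hT_gt : ∀ i, ℓ < i → T i = 0 := fun i hi =>
    sum_eq_zero fun ab hab => by
      rw [coeff_pow_of_lt h0 (by have := mem_antidiagonal.mp hab; omega), zero_smul]
  have hT_self : T ℓ = Λ.coeff 1 ^ ℓ • B ℓ := by
    simp only [T]
    rw [sum_eq_single_of_mem (0, ℓ) (by simp), coeff_pow_self h0, hasseDeriv_zero']
    rintro ⟨a, b⟩ hab hne
    have hb : b < ℓ := by
      have := mem_antidiagonal.mp hab
      by_contra
      exact hne (Prod.ext (by simp only; omega) (by simp only; omega))
    rw [coeff_pow_of_lt h0 hb, zero_smul]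
  have hsum : ∑ i ∈ range N, T i = ∑ i ∈ range ℓ, T i + Λ.coeff 1 ^ ℓ • B ℓ := by
    rw [← hT_self, ← sum_range_succ]
    refine (sum_subset (range_subset_range.mpr hℓN) fun i hi hni => hT_gt i ?_).symm
    simp only [mem_range] at hi hni
    omega
  have hmem := hk ℓ
  rw [hasseDeriv_modByMonic_eq_sum hΛ hΛd hB, hsum] at hmem
  rw [← Submodule.smul_mem_iff _ (pow_ne_zero ℓ h1)]
  simpa using
    (degreeLE F k).sub_mem hmem (Submodule.sum_mem _ fun i hi => hT_lt i (mem_range.mp hi))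

/-- If `A` has pseudodegree at most `k` and degree at most `D`, then
`A = Σ_{i=0}^{⌊D/q⌋} Â_i · X^(iq)` for polynomials `Â_i` of degree at most `k + ⌊D/q⌋`. -/
theorem stmt7 {F : Type*} [Field F] [Fintype F] (q : ℕ) (hq : Fintype.card F = q)
    (A : F[X]) (k D : ℕ) (hpdeg : PdegLE q A k) (hdeg : A.degree ≤ (D : ℕ)) :
    ∃ Ahat : ℕ → F[X],
      (∀ i, (Ahat i).degree ≤ ((k + D / q : ℕ) : WithBot ℕ)) ∧
      A = ∑ i ∈ Finset.range (D / q + 1), Ahat i * X ^ (i * q) := by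
  obtain ⟨n, hp, hcard⟩ := FiniteField.card F (ringChar F)
  have : Fact (ringChar F).Prime := ⟨hp⟩
  have hq1 : 1 < q := hq ▸ Fintype.one_lt_card
  have hΛdeg : (X ^ q - X : F[X]).natDegree = q := FiniteField.X_pow_card_sub_X_natDegree_eq F hq1
  have hΛ : (X ^ q - X : F[X]).Monic := monic_X_pow_sub (by rw [degree_X]; exact_mod_cast hq1)
  have h0 : (X ^ q - X : F[X]).coeff 0 = 0 := by
    simp [coeff_X_pow, (Nat.zero_lt_of_lt hq1).ne]
  have h1 : (X ^ q - X : F[X]).coeff 1 ≠ 0 := by simp [coeff_X_pow, hq1.ne]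
  have hΛd : ∀ d, AdjoinRoot.mk (X ^ q - X) (hasseDeriv d (X ^ q - X)) =
      AdjoinRoot.of (X ^ q - X) ((X ^ q - X : F[X]).coeff d) := by
    obtain rfl : q = ringChar F ^ (n : ℕ) := hq ▸ hcard
    exact mk_hasseDeriv_self h0 fun d hd => hasseDeriv_X_pow_char_pow_sub_X _ hd
  obtain ⟨B, hB, rfl⟩ := exists_eq_sum_mul_pow_of_degree_lt hΛ (D / q + 1) (A := A) <| by
    refine hdeg.trans_lt ?_
    rw [hΛdeg, mul_comm]
    exact_mod_cast Nat.lt_mul_div_succ D (by omega)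
  exact exists_eq_sum_mul_X_pow_mul fun i hi =>
    degree_le_of_degree_hasseDeriv_modByMonic_le hΛ h0 h1 hΛd hB hpdeg i (Nat.lt_succ_of_le hi)
end

section
/- Let q be a prime power, let M ≥ 1 and k ≥ 0 be integers, and let A(X) ∈ 𝔽_q[X] with deg(A) < Mq. Suppose that for every ℓ with 0 ≤ ℓ < M, the remainder of the ℓ-th Hasse derivative A^{[ℓ]}(X) upon division by Λ(X) = X^q − X has degree at most k. Then A has pseudodegree at most k, i.e., for every ℓ ≥ 0 the remainder of A^{[ℓ]}(X) upon division by Λ(X) has degree at most k. -/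
/-!
Write `Λ = X ^ q - X`. Its Hasse derivatives are constant modulo `Λ` (the binomial coefficients
`q.choose j` with `0 < j < q` vanish in characteristic `p`), so by the Leibniz rule the
pseudodegree of a product is at most the sum of the pseudodegrees, and every `Λ`-adic
expansion `∑_{i<M} B_i Λ^i` with `deg B_i ≤ k` has pseudodegree at most `k`.

Conversely, send such a tuple `(B_i)` to the remainders `(∑ B_i Λ^i)^{[ℓ]} mod Λ`, `ℓ < M`. A
polynomial of degree `< M q` whose first `M` Hasse derivatives vanish on `𝔽_q` has a root of
multiplicity `≥ M` at every point of `𝔽_q`, hence is zero; together with the uniqueness of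
`Λ`-adic expansions this makes the map injective. It maps the finite set of tuples with
`deg B_i ≤ k` into itself, hence onto itself, so every `A` satisfying the hypothesis is such an
expansion.
-/

open Polynomial

namespace Polynomial

section CommRing

variable {R : Type*} [CommRing R]

theorem degree_hasseDeriv_le (f : R[X]) (ℓ : ℕ) : (hasseDeriv ℓ f).degree ≤ f.degree := by
  rcases eq_or_ne f 0 with rfl | hf
  · simp
  rw [degree_eq_natDegree hf]
  exact degree_le_of_natDegree_le ((natDegree_hasseDeriv_le f ℓ).trans (Nat.sub_le _ _))

noncomputable def degreeLEModulo (g : R[X]) (k : ℕ) : Submodule R R[X] :=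
  degreeLE R k ⊔ (Ideal.span {g}).restrictScalars R

theorem mem_degreeLEModulo_iff {g : R[X]} (hg : g.Monic) {k : ℕ} {p : R[X]} :
    p ∈ degreeLEModulo g k ↔ (p %ₘ g).degree ≤ k := by
  refine ⟨fun hp => ?_, fun hp => ?_⟩
  · obtain ⟨r, hr, u, hu, rfl⟩ := Submodule.mem_sup.1 hp
    obtain ⟨v, rfl⟩ := Ideal.mem_span_singleton.1 (Submodule.restrictScalars_mem R _ _ |>.1 hu)
    rw [add_modByMonic, (modByMonic_eq_zero_iff_dvd hg).2 (dvd_mul_right g v), add_zero]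
    exact (degree_modByMonic_le_left).trans (mem_degreeLE.1 hr)
  · rw [← modByMonic_add_div p g]
    exact Submodule.add_mem_sup (mem_degreeLE.2 hp)
      (Ideal.mem_span_singleton.2 (dvd_mul_right g _))

theorem mul_mem_degreeLEModulo {g p r : R[X]} {m n : ℕ} (hp : p ∈ degreeLEModulo g m)
    (hr : r ∈ degreeLEModulo g n) : p * r ∈ degreeLEModulo g (m + n) := by
  obtain ⟨p₀, hp₀, p₁, hp₁, rfl⟩ := Submodule.mem_sup.1 hp
  obtain ⟨r₀, hr₀, r₁, hr₁, rfl⟩ := Submodule.mem_sup.1 hr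
  have hg : p₀ * r₁ + p₁ * (r₀ + r₁) ∈ (Ideal.span {g}).restrictScalars R :=
    Ideal.add_mem _ (Ideal.mul_mem_left _ _ hr₁) (Ideal.mul_mem_right _ _ hp₁)
  have hdeg : p₀ * r₀ ∈ degreeLE R (m + n : ℕ) := by
    rw [mem_degreeLE] at *
    exact (degree_mul_le _ _).trans (by push_cast; exact add_le_add hp₀ hr₀)
  rw [show (p₀ + p₁) * (r₀ + r₁) = p₀ * r₀ + (p₀ * r₁ + p₁ * (r₀ + r₁)) by ring]
  exact Submodule.add_mem_sup hdeg hg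

noncomputable def pseudodegreeLE (g : R[X]) (k : ℕ) : Submodule R R[X] :=
  ⨅ ℓ, (degreeLEModulo g k).comap (hasseDeriv ℓ)

theorem mem_pseudodegreeLE {g f : R[X]} {k : ℕ} :
    f ∈ pseudodegreeLE g k ↔ ∀ ℓ, hasseDeriv ℓ f ∈ degreeLEModulo g k := by
  simp [pseudodegreeLE]

theorem mul_mem_pseudodegreeLE {g f h : R[X]} {m n : ℕ} (hf : f ∈ pseudodegreeLE g m)
    (hh : h ∈ pseudodegreeLE g n) : f * h ∈ pseudodegreeLE g (m + n) := by
  rw [mem_pseudodegreeLE] at *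
  intro ℓ
  rw [hasseDeriv_mul]
  exact Submodule.sum_mem _ fun x _ => mul_mem_degreeLEModulo (hf x.1) (hh x.2)

theorem mem_pseudodegreeLE_of_degree_le (g : R[X]) {f : R[X]} {k : ℕ} (hf : f.degree ≤ k) :
    f ∈ pseudodegreeLE g k := by
  refine mem_pseudodegreeLE.2 fun ℓ => Submodule.mem_sup_left (mem_degreeLE.2 ?_)
  exact (degree_hasseDeriv_le f ℓ).trans hf

theorem pow_mem_pseudodegreeLE_zero {g f : R[X]} (hf : f ∈ pseudodegreeLE g 0) (i : ℕ) :
    f ^ i ∈ pseudodegreeLE g 0 := by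
  induction i with
  | zero => exact pow_zero f ▸ mem_pseudodegreeLE_of_degree_le g degree_one_le
  | succ i ih => simpa [pow_succ] using mul_mem_pseudodegreeLE ih hf

theorem sum_mul_pow_mem_pseudodegreeLE {g f : R[X]} (hf : f ∈ pseudodegreeLE g 0) {k M : ℕ}
    {B : Fin M → R[X]} (hB : ∀ i, (B i).degree ≤ k) :
    ∑ i, B i * f ^ (i : ℕ) ∈ pseudodegreeLE g k :=
  Submodule.sum_mem _ fun i _ => add_zero k ▸ mul_mem_pseudodegreeLE
    (mem_pseudodegreeLE_of_degree_le g (hB i)) (pow_mem_pseudodegreeLE_zero hf i)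

theorem le_rootMultiplicity_of_hasseDeriv_eval_eq_zero {f : R[X]} (hf : f ≠ 0) {a : R} {N : ℕ}
    (h : ∀ ℓ < N, (hasseDeriv ℓ f).eval a = 0) : N ≤ f.rootMultiplicity a := by
  rw [rootMultiplicity_eq_natTrailingDegree, ← taylor_apply]
  exact le_natTrailingDegree ((taylor_eq_zero _ _).not.2 hf) fun ℓ hℓ => by
    rw [taylor_coeff, h ℓ hℓ]

theorem degree_sum_mul_pow_lt {g : R[X]} {M : ℕ} {B : Fin M → R[X]}
    (hB : ∀ i, (B i).degree < g.natDegree) :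
    (∑ i, B i * g ^ (i : ℕ)).degree < ↑(M * g.natDegree) := by
  refine (degree_sum_le _ _).trans_lt ((Finset.sup_lt_iff (WithBot.bot_lt_coe _)).2 fun i _ => ?_)
  rcases eq_or_ne (B i) 0 with hBi | hBi
  · rw [hBi, zero_mul, degree_zero]
    exact WithBot.bot_lt_coe _
  have hlt : (B i).natDegree < g.natDegree := (natDegree_lt_iff_degree_lt hBi).2 (hB i)
  refine degree_le_natDegree.trans_lt (Nat.cast_lt.2 ?_)
  calc (B i * g ^ (i : ℕ)).natDegree ≤ (B i).natDegree + (i : ℕ) * g.natDegree :=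
        natDegree_mul_le.trans (Nat.add_le_add_left natDegree_pow_le _)
    _ < ((i : ℕ) + 1) * g.natDegree := by rw [add_one_mul]; omega
    _ ≤ M * g.natDegree := Nat.mul_le_mul_right _ i.2

theorem finite_setOf_degree_le [Finite R] (n : ℕ) : {f : R[X] | f.degree ≤ n}.Finite := by
  have : Finite (degreeLT R (n + 1)) := Finite.of_equiv _ (degreeLTEquiv R (n + 1)).toEquiv.symm
  convert (degreeLT R (n + 1) : Set R[X]).toFinite using 1
  ext f
  rw [SetLike.mem_coe, degreeLT_succ_eq_degreeLE, mem_degreeLE]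
  rfl

end CommRing

section CharP

variable {R : Type*} [CommRing R] {p : ℕ} [CharP R p]

theorem degree_hasseDeriv_X_pow_prime_pow_le_zero (hp : p.Prime) (n : ℕ) {j : ℕ} (hj : j ≠ 0) :
    (hasseDeriv j (X ^ p ^ n : R[X])).degree ≤ 0 := by
  rw [X_pow_eq_monomial, hasseDeriv_monomial]
  by_cases hjq : j = p ^ n
  · rw [hjq, Nat.sub_self]
    exact degree_monomial_le _ _
  · rw [(CharP.cast_eq_zero_iff R p _).2 (hp.dvd_choose_pow hj hjq), zero_mul, monomial_zero_right,
      degree_zero]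
    exact bot_le

theorem degree_hasseDeriv_X_le_zero {j : ℕ} (hj : j ≠ 0) :
    (hasseDeriv j (X : R[X])).degree ≤ 0 := by
  rcases (Nat.one_le_iff_ne_zero.2 hj).eq_or_lt with rfl | hj
  · simp
  · simp [hasseDeriv_X _ hj]

theorem X_pow_prime_pow_sub_X_mem_pseudodegreeLE_zero (hp : p.Prime) (n : ℕ) :
    (X ^ p ^ n - X : R[X]) ∈ pseudodegreeLE (X ^ p ^ n - X) 0 := by
  refine mem_pseudodegreeLE.2 fun j => ?_
  rcases eq_or_ne j 0 with rfl | hj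
  · rw [hasseDeriv_zero']
    exact Submodule.mem_sup_right (Ideal.mem_span_singleton_self _)
  · refine Submodule.mem_sup_left (mem_degreeLE.2 ?_)
    rw [map_sub]
    exact (degree_sub_le _ _).trans (max_le (degree_hasseDeriv_X_pow_prime_pow_le_zero hp n hj)
      (degree_hasseDeriv_X_le_zero hj))

end CharP

section Domain

variable {R : Type*} [CommRing R] [IsDomain R]

theorem eq_zero_of_hasseDeriv_eval_eq_zero {f : R[X]} (s : Finset R) {N : ℕ}
    (hdeg : f.degree < ↑(N * s.card)) (h : ∀ a ∈ s, ∀ ℓ < N, (hasseDeriv ℓ f).eval a = 0) :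
    f = 0 := by
  classical
  by_contra hf
  have hle : N • s.val ≤ f.roots := Multiset.le_iff_count.2 fun a => by
    rw [Multiset.count_nsmul, Multiset.count_eq_of_nodup s.nodup, count_roots]
    split_ifs with ha
    · simpa using le_rootMultiplicity_of_hasseDeriv_eval_eq_zero hf (h a ha)
    · simp
  have hcard : N * s.card ≤ f.natDegree := by
    simpa using (Multiset.card_le_card hle).trans (card_roots' f)
  exact (natDegree_lt_iff_degree_lt hf).2 hdeg |>.not_ge hcard

theorem eq_zero_of_sum_mul_pow_eq_zero {g : R[X]} {M : ℕ} {B : Fin M → R[X]}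
    (hB : ∀ i, (B i).degree < g.degree) (h : ∑ i, B i * g ^ (i : ℕ) = 0) : B = 0 := by
  induction M with
  | zero => exact Subsingleton.elim _ _
  | succ n ih =>
    have hg : g ≠ 0 := fun hg => by simpa [hg] using hB 0
    have hsplit : B 0 + g * ∑ i : Fin n, B i.succ * g ^ (i : ℕ) = 0 := by
      rw [← h, Fin.sum_univ_succ, Finset.mul_sum]
      simp [pow_succ, mul_comm, mul_left_comm]
    have h0 : B 0 = 0 := eq_zero_of_dvd_of_degree_lt
      ⟨-_, by rw [mul_neg]; exact eq_neg_of_add_eq_zero_left hsplit⟩ (hB 0)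
    rw [h0, zero_add, mul_eq_zero, or_iff_right hg] at hsplit
    have htail := ih (fun i => hB i.succ) hsplit
    funext i
    exact Fin.cases h0 (fun i => congrFun htail i) i

theorem eq_of_sum_mul_pow_eq {g : R[X]} {M : ℕ} {B B' : Fin M → R[X]}
    (hB : ∀ i, (B i).degree < g.degree) (hB' : ∀ i, (B' i).degree < g.degree)
    (h : ∑ i, B i * g ^ (i : ℕ) = ∑ i, B' i * g ^ (i : ℕ)) : B = B' := by
  refine sub_eq_zero.1 (eq_zero_of_sum_mul_pow_eq_zero
    (fun i => (degree_sub_le _ _).trans_lt (max_lt (hB i) (hB' i))) ?_)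
  simp only [Pi.sub_apply, sub_mul, Finset.sum_sub_distrib, h, sub_self]

end Domain

section FiniteField

variable {F : Type*} [Field F] [Fintype F]

theorem monic_X_pow_card_sub_X : (X ^ Fintype.card F - X : F[X]).Monic :=
  monic_X_pow_sub (by rw [degree_X]; exact_mod_cast Fintype.one_lt_card)

theorem X_pow_card_sub_X_mem_pseudodegreeLE_zero :
    (X ^ Fintype.card F - X : F[X]) ∈ pseudodegreeLE (X ^ Fintype.card F - X) 0 := by
  obtain ⟨p, _, n, hp, hcard⟩ := FiniteField.card' F
  rw [hcard]
  exact X_pow_prime_pow_sub_X_mem_pseudodegreeLE_zero hp n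

theorem eq_of_hasseDeriv_modByMonic_eq {N : ℕ} {f h : F[X]}
    (hf : f.degree < ↑(N * Fintype.card F)) (hh : h.degree < ↑(N * Fintype.card F))
    (heq : ∀ ℓ < N, hasseDeriv ℓ f %ₘ (X ^ Fintype.card F - X) =
      hasseDeriv ℓ h %ₘ (X ^ Fintype.card F - X)) :
    f = h := by
  refine sub_eq_zero.1
    (eq_zero_of_hasseDeriv_eval_eq_zero (N := N) Finset.univ ?_ fun a _ ℓ hℓ => ?_)
  · rw [Finset.card_univ]
    exact (degree_sub_le f h).trans_lt (max_lt hf hh)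
  · obtain ⟨u, hu⟩ : X ^ Fintype.card F - X ∣ hasseDeriv ℓ (f - h) :=
      (modByMonic_eq_zero_iff_dvd monic_X_pow_card_sub_X).1
        (by rw [map_sub, sub_modByMonic, heq ℓ hℓ, sub_self])
    rw [hu, eval_mul, eval_sub, eval_pow, eval_X, FiniteField.pow_card, sub_self, zero_mul]

theorem exists_eq_sum_mul_pow_of_degree_modByMonic_le {M k : ℕ} (hk : k < Fintype.card F)
    {A : F[X]} (hA : A.degree < ↑(M * Fintype.card F))
    (hlow : ∀ ℓ < M, (hasseDeriv ℓ A %ₘ (X ^ Fintype.card F - X)).degree ≤ k) :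
    ∃ B : Fin M → F[X], (∀ i, (B i).degree ≤ k) ∧
      A = ∑ i, B i * (X ^ Fintype.card F - X) ^ (i : ℕ) := by
  set Λ : F[X] := X ^ Fintype.card F - X
  have hΛ : Λ.natDegree = Fintype.card F :=
    FiniteField.X_pow_card_sub_X_natDegree_eq F Fintype.one_lt_card
  have hΛdeg : Λ.degree = Λ.natDegree := degree_eq_natDegree monic_X_pow_card_sub_X.ne_zero
  set S : Set (Fin M → F[X]) := Set.univ.pi fun _ => {f | f.degree ≤ k}
  have hS : ∀ B ∈ S, ∀ i, (B i).degree < Λ.natDegree := fun B hB i =>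
    (hB i trivial).trans_lt (by rw [hΛ]; exact_mod_cast hk)
  have hsum : ∀ B ∈ S, (∑ i, B i * Λ ^ (i : ℕ)).degree < ↑(M * Fintype.card F) := fun B hB =>
    hΛ ▸ degree_sum_mul_pow_lt (hS B hB)
  let θ : (Fin M → F[X]) → Fin M → F[X] := fun B ℓ =>
    hasseDeriv ℓ (∑ i, B i * Λ ^ (i : ℕ)) %ₘ Λ
  have hmaps : Set.MapsTo θ S S := fun B hB ℓ _ =>
    (mem_degreeLEModulo_iff monic_X_pow_card_sub_X).1 <| mem_pseudodegreeLE.1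
      (sum_mul_pow_mem_pseudodegreeLE X_pow_card_sub_X_mem_pseudodegreeLE_zero
        fun i => hB i trivial) ℓ
  have hinj : Set.InjOn θ S := fun B hB B' hB' h =>
    eq_of_sum_mul_pow_eq (hΛdeg ▸ hS B hB) (hΛdeg ▸ hS B' hB')
      (eq_of_hasseDeriv_modByMonic_eq (hsum B hB) (hsum B' hB') fun ℓ hℓ => congrFun h ⟨ℓ, hℓ⟩)
  have hfin : S.Finite := Set.Finite.pi fun _ => finite_setOf_degree_le k
  obtain ⟨B, hB, hθB⟩ := ((hfin.injOn_iff_bijOn_of_mapsTo hmaps).1 hinj).surjOn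
    (show (fun ℓ : Fin M => hasseDeriv ℓ A %ₘ Λ) ∈ S from fun ℓ _ => hlow ℓ ℓ.2)
  exact ⟨B, fun i => hB i trivial,
    eq_of_hasseDeriv_modByMonic_eq hA (hsum B hB) fun ℓ hℓ => (congrFun hθB ⟨ℓ, hℓ⟩).symm⟩

theorem mem_pseudodegreeLE_of_degree_modByMonic_le {M k : ℕ} {A : F[X]}
    (hA : A.degree < ↑(M * Fintype.card F))
    (hlow : ∀ ℓ < M, (hasseDeriv ℓ A %ₘ (X ^ Fintype.card F - X)).degree ≤ k) :
    A ∈ pseudodegreeLE (X ^ Fintype.card F - X) k := by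
  rcases lt_or_ge k (Fintype.card F) with hk | hk
  · obtain ⟨B, hB, rfl⟩ := exists_eq_sum_mul_pow_of_degree_modByMonic_le hk hA hlow
    exact sum_mul_pow_mem_pseudodegreeLE X_pow_card_sub_X_mem_pseudodegreeLE_zero hB
  · refine mem_pseudodegreeLE.2 fun ℓ => (mem_degreeLEModulo_iff monic_X_pow_card_sub_X).2 ?_
    refine (degree_modByMonic_lt _ monic_X_pow_card_sub_X).le.trans ?_
    rw [degree_eq_natDegree monic_X_pow_card_sub_X.ne_zero,
      FiniteField.X_pow_card_sub_X_natDegree_eq F Fintype.one_lt_card]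
    exact_mod_cast hk

end FiniteField

end Polynomial

theorem stmt9_general {F : Type*} [Field F] [Fintype F] (q : ℕ) (hq : Fintype.card F = q)
    (M k : ℕ) (A : F[X]) (hdeg : A.degree < ((M * q : ℕ) : WithBot ℕ))
    (hlow : ∀ ℓ < M, ((hasseDeriv ℓ A) %ₘ (X ^ q - X)).degree ≤ (k : WithBot ℕ)) :
    ∀ ℓ : ℕ, ((hasseDeriv ℓ A) %ₘ (X ^ q - X)).degree ≤ (k : WithBot ℕ) := by
  subst hq
  exact fun ℓ => (mem_degreeLEModulo_iff monic_X_pow_card_sub_X).1 <|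
    mem_pseudodegreeLE.1 (mem_pseudodegreeLE_of_degree_modByMonic_le hdeg hlow) ℓ

/-- Let `M ≥ 1`, `k ≥ 0`, and `A ∈ 𝔽_q[X]` with `deg(A) < Mq`. If for every
`ℓ < M` the remainder of `A^{[ℓ]}` upon division by `Λ(X) = X^q - X` has degree at most `k`,
then this holds for every `ℓ ≥ 0`, i.e. `A` has pseudodegree at most `k`. -/
theorem stmt9 {F : Type*} [Field F] [Fintype F] (q : ℕ) (hq : Fintype.card F = q)
    (M k : ℕ) (hM : 1 ≤ M) (A : F[X]) (hdeg : A.degree < ((M * q : ℕ) : WithBot ℕ))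
    (hlow : ∀ ℓ < M, ((hasseDeriv ℓ A) %ₘ (X ^ q - X)).degree ≤ (k : WithBot ℕ)) :
    ∀ ℓ : ℕ, ((hasseDeriv ℓ A) %ₘ (X ^ q - X)).degree ≤ (k : WithBot ℕ) :=
  stmt9_general q hq M k A hdeg hlow
end

section
/- Let q be a prime power and let A(X) ∈ 𝔽_q[X] be a nonzero polynomial of pseudodegree at most k. Then the residue of deg(A) modulo q lies in the interval [0, k]. -/
/-!
Write `q = p^s` and `deg A = q m + r` with `0 ≤ r < q`. By Lucas' theorem `binom(q m + r, q m) ≡ 1 (mod p)`,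
so the Hasse derivative `A^{[q m]}` has degree exactly `r`. Since `r < q`, it is its own
remainder modulo `X^q - X`, and the pseudodegree bound gives `r ≤ k`.
-/

open Polynomial

namespace Choose

theorem choose_pow_mul_add_modEq_one {p : ℕ} [Fact p.Prime] (s m : ℕ) {r : ℕ}
    (hr : r < p ^ s) : ((p ^ s * m + r).choose (p ^ s * m) : ℤ) ≡ 1 [ZMOD p] := by
  induction s generalizing r with
  | zero => simp_all
  | succ s ih =>
    have hp : 0 < p := (Fact.out : p.Prime).pos
    have hr' : r / p < p ^ s := Nat.div_lt_of_lt_mul (by rwa [← pow_succ'])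
    refine choose_modEq_choose_mod_mul_choose_div.trans ?_
    rw [pow_succ', mul_assoc, Nat.mul_add_mod, Nat.mul_mod_right, Nat.mul_add_div hp,
      Nat.mul_div_cancel_left _ hp, Nat.choose_zero_right, Nat.cast_one, one_mul]
    exact ih hr'

end Choose

theorem Nat.cast_choose_pow_mul_add_eq_one (R : Type*) [AddGroupWithOne R] {p : ℕ} [CharP R p]
    [Fact p.Prime] (s m : ℕ) {r : ℕ} (hr : r < p ^ s) :
    ((p ^ s * m + r).choose (p ^ s * m) : R) = 1 := by
  exact_mod_cast (CharP.intCast_eq_intCast R p).mpr (Choose.choose_pow_mul_add_modEq_one s m hr)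

namespace Polynomial

theorem hasseDeriv_coeff_natDegree_sub {R : Type*} [Semiring R] (f : R[X]) {n : ℕ}
    (hn : n ≤ f.natDegree) :
    (hasseDeriv n f).coeff (f.natDegree - n) = f.natDegree.choose n * f.leadingCoeff := by
  rw [hasseDeriv_coeff, Nat.sub_add_cancel hn, leadingCoeff]

theorem modByMonic_X_pow_sub_X_eq_self {R : Type*} [Ring R] [Nontrivial R] {q : ℕ} (hq : 1 < q)
    {f : R[X]} (hf : f.degree < q) : f %ₘ (X ^ q - X) = f := by
  have hX : (X : R[X]).degree < q := degree_X_le.trans_lt (by exact_mod_cast hq)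
  rw [modByMonic_eq_self_iff (monic_X_pow_sub hX),
    degree_sub_eq_left_of_degree_lt (by rwa [degree_X_pow]), degree_X_pow]
  exact hf

end Polynomial

/-- If `A ∈ 𝔽_q[X]` is nonzero of pseudodegree at most `k`, then
`deg(A) mod q ∈ [0, k]`. -/
theorem stmt10 {F : Type*} [Field F] [Fintype F] (q : ℕ) (hq : Fintype.card F = q)
    (A : F[X]) (hA : A ≠ 0) (k : ℕ) (hpdeg : PdegLE q A k) :
    A.natDegree % q ≤ k := by
  obtain ⟨p, _, s, hp, hcard⟩ := FiniteField.card' F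
  have := Fact.mk hp
  have hq1 : 1 < q := hq ▸ Fintype.one_lt_card
  have hd : q * (A.natDegree / q) + A.natDegree % q = A.natDegree := Nat.div_add_mod _ q
  have hr : A.natDegree % q < q := Nat.mod_lt _ (by omega)
  generalize A.natDegree / q = m, A.natDegree % q = r at hd hr ⊢
  obtain rfl : q = p ^ (s : ℕ) := hq.symm.trans hcard
  have hcoeff : (hasseDeriv (p ^ (s : ℕ) * m) A).coeff r ≠ 0 := by
    rw [show r = A.natDegree - p ^ (s : ℕ) * m by omega,
      hasseDeriv_coeff_natDegree_sub A (by omega), ← hd,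
      Nat.cast_choose_pow_mul_add_eq_one F s m hr, one_mul]
    exact leadingCoeff_ne_zero.mpr hA
  have hdeg : (hasseDeriv (p ^ (s : ℕ) * m) A).degree < (p ^ (s : ℕ) : ℕ) := by
    have := natDegree_hasseDeriv_le A (p ^ (s : ℕ) * m)
    exact degree_le_natDegree.trans_lt (by exact_mod_cast (by omega : _ < p ^ (s : ℕ)))
  have hpdeg_m := hpdeg (p ^ (s : ℕ) * m)
  rw [modByMonic_X_pow_sub_X_eq_self hq1 hdeg] at hpdeg_m
  exact_mod_cast (le_degree_of_ne_zero hcoeff).trans hpdeg_m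
end

section
/- Let q be a prime power, let M ≥ 1 and k ≥ 1 be integers, and let A(X) ∈ 𝔽_q[X] be a nonzero polynomial with deg(A) < Mq and pseudodegree strictly less than k. Then the number of α ∈ 𝔽_q with mult(A, α) ≥ M is at most k. -/
open Polynomial

/-! A root `α` of multiplicity `≥ M` kills `A^{[ℓ]}(α)` for all `ℓ < M`, and since `α ∈ 𝔽_q` is a
root of `X^q - X`, it also kills the remainder of `A^{[ℓ]}` modulo `X^q - X`. If all these
remainders vanished for `ℓ < M`, every element of `𝔽_q` would be a root of multiplicity `≥ M`,
forcing `deg A ≥ Mq`. So one remainder is a nonzero polynomial of degree `< k` vanishing at every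
such `α`, and there are fewer than `k` of them. -/

namespace Polynomial

section CommRing

variable {R : Type*} [CommRing R]

theorem X_sub_C_pow_dvd_iff_forall_hasseDeriv_eval_eq_zero {p : R[X]} {t : R} {n : ℕ} :
    (X - C t) ^ n ∣ p ↔ ∀ ℓ < n, (hasseDeriv ℓ p).eval t = 0 := by
  rw [X_sub_C_pow_dvd_iff, ← taylor_apply, X_pow_dvd_iff]
  simp only [taylor_coeff]

theorem eval_modByMonic_eq_self_of_root {p q : R[X]} {t : R} (ht : q.eval t = 0) :
    (p %ₘ q).eval t = p.eval t := by
  simpa using aeval_modByMonic_eq_self_of_root (p := p) (R := R) (x := t) (by simpa using ht)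

variable [IsDomain R]

theorem nsmul_val_le_roots_of_forall_X_sub_C_pow_dvd {p : R[X]} (hp : p ≠ 0) {s : Finset R}
    {n : ℕ} (h : ∀ a ∈ s, (X - C a) ^ n ∣ p) : n • s.val ≤ p.roots := by
  classical
  rw [Multiset.le_iff_count]
  intro a
  rw [Multiset.count_nsmul, count_roots]
  by_cases ha : a ∈ s
  · rw [Multiset.count_eq_one_of_mem s.nodup ha, mul_one]
    exact (le_rootMultiplicity_iff hp).2 (h a ha)
  · simp [Multiset.count_eq_zero.2 ha]

theorem mul_card_le_natDegree_of_forall_X_sub_C_pow_dvd {p : R[X]} (hp : p ≠ 0) {s : Finset R}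
    {n : ℕ} (h : ∀ a ∈ s, (X - C a) ^ n ∣ p) : n * s.card ≤ p.natDegree := by
  simpa using (Multiset.card_le_card (nsmul_val_le_roots_of_forall_X_sub_C_pow_dvd hp h)).trans
    (card_roots' p)

theorem ncard_le_natDegree_of_forall_eval_eq_zero {p : R[X]} (hp : p ≠ 0) {S : Set R}
    (h : ∀ a ∈ S, p.eval a = 0) : S.ncard ≤ p.natDegree :=
  (Set.ncard_le_ncard (fun a ha => mem_rootSet.2 ⟨hp, by simpa using h a ha⟩)
    (p.rootSet_finite R)).trans (p.ncard_rootSet_le R)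

end CommRing

end Polynomial

namespace FiniteField

variable {K : Type*} [Field K] [Fintype K]

theorem eval_modByMonic_X_pow_card_sub_X (p : K[X]) (a : K) :
    (p %ₘ (X ^ Fintype.card K - X)).eval a = p.eval a :=
  eval_modByMonic_eq_self_of_root (by simp [pow_card])

theorem hasseDeriv_modByMonic_X_pow_card_sub_X_eval_eq_zero {A : K[X]} {a : K} {M ℓ : ℕ}
    (ha : (X - C a) ^ M ∣ A) (hℓ : ℓ < M) :
    (hasseDeriv ℓ A %ₘ (X ^ Fintype.card K - X)).eval a = 0 := by
  rw [eval_modByMonic_X_pow_card_sub_X]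
  exact X_sub_C_pow_dvd_iff_forall_hasseDeriv_eval_eq_zero.1 ha ℓ hℓ

theorem exists_hasseDeriv_modByMonic_X_pow_card_sub_X_ne_zero {A : K[X]} (hA : A ≠ 0) {M : ℕ}
    (hdeg : A.natDegree < M * Fintype.card K) :
    ∃ ℓ < M, hasseDeriv ℓ A %ₘ (X ^ Fintype.card K - X) ≠ 0 := by
  by_contra! hzero
  have hdvd : ∀ a ∈ (Finset.univ : Finset K), (X - C a) ^ M ∣ A := fun a _ =>
    X_sub_C_pow_dvd_iff_forall_hasseDeriv_eval_eq_zero.2 fun ℓ hℓ => by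
      rw [← eval_modByMonic_X_pow_card_sub_X, hzero ℓ hℓ, eval_zero]
  exact hdeg.not_ge (mul_card_le_natDegree_of_forall_X_sub_C_pow_dvd hA hdvd)

end FiniteField

theorem stmt12_general {F : Type*} [Field F] [Fintype F] (q : ℕ) (hq : Fintype.card F = q)
    (M k : ℕ)
    (A : F[X]) (hA : A ≠ 0) (hdeg : A.degree < ((M * q : ℕ) : WithBot ℕ))
    (hpdeg : ∀ ℓ : ℕ, ((hasseDeriv ℓ A) %ₘ (X ^ q - X)).degree < (k : WithBot ℕ)) :
    {α : F | (X - C α) ^ M ∣ A}.ncard ≤ k := by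
  subst hq
  obtain ⟨ℓ, hℓ, hB⟩ := FiniteField.exists_hasseDeriv_modByMonic_X_pow_card_sub_X_ne_zero hA
    ((natDegree_lt_iff_degree_lt hA).2 hdeg)
  calc {α : F | (X - C α) ^ M ∣ A}.ncard
      ≤ (hasseDeriv ℓ A %ₘ (X ^ Fintype.card F - X)).natDegree :=
        ncard_le_natDegree_of_forall_eval_eq_zero hB fun _ hα =>
          FiniteField.hasseDeriv_modByMonic_X_pow_card_sub_X_eval_eq_zero hα hℓ
    _ ≤ k := ((natDegree_lt_iff_degree_lt hB).2 (hpdeg ℓ)).le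

/-- Let `M ≥ 1`, `k ≥ 1`, and let `A ∈ 𝔽_q[X]` be nonzero with
`deg(A) < Mq` and pseudodegree strictly less than `k`. Then the number of `α ∈ 𝔽_q`
with `mult(A, α) ≥ M` is at most `k`. -/
theorem stmt12 {F : Type*} [Field F] [Fintype F] (q : ℕ) (hq : Fintype.card F = q)
    (M k : ℕ) (hM : 1 ≤ M) (hk : 1 ≤ k)
    (A : F[X]) (hA : A ≠ 0) (hdeg : A.degree < ((M * q : ℕ) : WithBot ℕ))
    (hpdeg : ∀ ℓ : ℕ, ((hasseDeriv ℓ A) %ₘ (X ^ q - X)).degree < (k : WithBot ℕ)) :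
    {α : F | (X - C α) ^ M ∣ A}.ncard ≤ k :=
  stmt12_general q hq M k A hA hdeg hpdeg
end

section
/- Let q be a prime power, let c, h, M be positive integers, let γ ∈ [0, 1) be a real number with c < (1 − 2γ)·M/2, and let r_1, r_2 : 𝔽_q → 𝔽_q be functions with Δ(r_1, r_2) ≤ γq. Suppose F(X), G(X) ∈ 𝔽_q[X] with deg(F) < cq and deg(G) < cq are, respectively, an r_1-twisted (h, M)-pseudopolynomial and an r_2-twisted (h, M)-pseudopolynomial, and let k be an integer with k > (M/((1 − 2γ)M − 2c))·(h + 1). Then there exist polynomials A(X), B(X) ∈ 𝔽_q[X], not both zero, each of degree less than Mq and pseudodegree at most k, such that A(X)·F(X) = B(X)·G(X). -/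
open Polynomial

/-- `P ∈ 𝔽_q[X]` is an `r`-twisted `(h, M)`-pseudopolynomial: for every `ℓ < M` there is
`U_ℓ ∈ 𝔽_q[X]` of degree at most `h` with `P^{[ℓ]}(α) = r(α)·U_ℓ(α)` for all `α ∈ 𝔽_q`. -/
def Twisted {F : Type*} [Field F] (r : F → F) (h M : ℕ) (P : F[X]) : Prop :=
  ∀ ℓ < M, ∃ U : F[X], U.degree ≤ (h : WithBot ℕ) ∧
    ∀ α : F, (hasseDeriv ℓ P).eval α = r α * U.eval α

/-!
Write `A` and `B` in base `Λ = X^q - X` with digits of degree `≤ k`. Since `Λ(X + α) = Λ(X)` for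
`α ∈ 𝔽_q`, modulo `Λ` the Hasse derivatives of such a polynomial are combinations of Hasse
derivatives of its digits, so it has pseudodegree `≤ k`. At a point where `r₁ = r₂`, the `ℓ`-th
Hasse derivative of `H = A F - B G` is `r₁(α)` times the value of a polynomial `R_ℓ` of degree
`≤ k + h` depending linearly on `(A, B)`. For `deg A, deg B < T = ⌊uq⌋` with `u = (1 - γ)M - c`
the pair has about `2uk` free coefficients, and the bound on `k` makes this exceed the
`M(k + h + 1)` conditions `R_ℓ = 0`, `ℓ < M`. Then `H` vanishes to order `M` at `≥ (1 - γ)q`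
points, more zeros than `deg H < T + cq ≤ M(1 - γ)q` allows, so `H = 0`. When `k ≥ q - 1` every
polynomial has pseudodegree `≤ k`, and `A = G`, `B = F` works.
-/

open Finset

namespace PseudoPolynomial

variable {K : Type*} [Field K]

theorem degree_X_pow_sub_X {n : ℕ} (hn : 1 < n) : (X ^ n - X : K[X]).degree = n := by
  rw [degree_sub_eq_left_of_degree_lt] <;> simp [hn]

theorem degree_hasseDeriv_le_of_degree_le {P : K[X]} {k : ℕ} (hP : P.degree ≤ k) (n : ℕ) :
    (hasseDeriv n P).degree ≤ k :=
  degree_le_natDegree.trans <| by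
    exact_mod_cast ((natDegree_hasseDeriv_le P n).trans (Nat.sub_le _ _)).trans
      (natDegree_le_of_degree_le hP)

theorem finrank_degreeLT (m : ℕ) : Module.finrank K K[X]_m = m := by
  simp [(degreeLTEquiv K m).finrank_eq]

theorem eq_zero_of_sum_mul_pow_eq_zero {R : Type*} [CommRing R] {g : R[X]} (hg : g.Monic) :
    ∀ {n : ℕ} {f : Fin n → R[X]}, (∀ i, (f i).degree < g.degree) →
      ∑ i, f i * g ^ (i : ℕ) = 0 → f = 0
  | 0, f, _, _ => Subsingleton.elim f 0
  | n + 1, f, hdeg, hsum => by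
    have hsplit : f 0 + g * ∑ i : Fin n, f i.succ * g ^ (i : ℕ) = 0 := by
      rw [← hsum, Fin.sum_univ_succ, Finset.mul_sum]
      simp only [Fin.val_zero, pow_zero, mul_one, Fin.val_succ, pow_succ]
      congr 1
      exact sum_congr rfl fun i _ => by ring
    obtain ⟨htail, hhead⟩ := div_modByMonic_unique _ _ hg ⟨hsplit, hdeg 0⟩
    rw [zero_divByMonic] at htail
    rw [zero_modByMonic] at hhead
    have htail0 := eq_zero_of_sum_mul_pow_eq_zero hg (fun i => hdeg i.succ) htail.symm
    funext i
    exact Fin.cases hhead.symm (fun j => congrFun htail0 j) i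

theorem pow_X_sub_C_dvd_of_hasseDeriv_eval_eq_zero {R : Type*} [CommRing R] {P : R[X]} {α : R}
    {M : ℕ} (h : ∀ ℓ < M, (hasseDeriv ℓ P).eval α = 0) : (X - C α) ^ M ∣ P := by
  rw [← map_dvd_iff (taylorEquiv α)]
  change taylor α _ ∣ taylor α P
  rw [taylor_pow, map_sub, taylor_X, taylor_C, add_sub_cancel_right, X_pow_dvd_iff]
  simpa only [taylor_coeff] using h

theorem eq_zero_of_hasseDeriv_eval_eq_zero {P : K[X]} {s : Finset K}
    {M : ℕ} (hP : P.degree < (M * #s : ℕ)) (h : ∀ α ∈ s, ∀ ℓ < M, (hasseDeriv ℓ P).eval α = 0) :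
    P = 0 := by
  by_contra hne
  rw [← natDegree_lt_iff_degree_lt hne] at hP
  have hdvd : ∏ α ∈ s, (X - C α) ^ M ∣ P :=
    Finset.prod_dvd_of_coprime
      (fun α _ β _ hαβ => ((pairwise_coprime_X_sub_C Function.injective_id) hαβ).pow)
      fun α hα => pow_X_sub_C_dvd_of_hasseDeriv_eval_eq_zero (h α hα)
  have := natDegree_le_of_dvd hdvd hne
  rw [natDegree_prod _ _ fun α _ => pow_ne_zero M (X_sub_C_ne_zero α)] at this
  simp only [natDegree_pow, natDegree_X_sub_C, mul_one, sum_const, smul_eq_mul] at this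
  rw [mul_comm] at this
  omega

theorem mul_eq_mul_of_hasseDeriv_eval_eq_zero {A B P Q : K[X]} {T e : ℕ}
    (hA : A.degree < T) (hB : B.degree < T) (hP : P.degree < e) (hQ : Q.degree < e)
    {s : Finset K} {M : ℕ} (hs : T + e ≤ M * #s)
    (h : ∀ α ∈ s, ∀ ℓ < M, (hasseDeriv ℓ (A * P - B * Q)).eval α = 0) : A * P = B * Q := by
  have hmul {C R : K[X]} (hC : C.degree < T) (hR : R.degree < e) :
      (C * R).degree < (M * #s : ℕ) :=
    calc (C * R).degree ≤ C.degree + e := (degree_mul_le _ _).trans (add_le_add le_rfl hR.le)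
      _ < T + e := WithBot.add_lt_add_right WithBot.coe_ne_bot hC
      _ ≤ (M * #s : ℕ) := by exact_mod_cast hs
  exact sub_eq_zero.mp <| eq_zero_of_hasseDeriv_eval_eq_zero
    ((degree_sub_le _ _).trans_lt (max_lt (hmul hA hP) (hmul hB hQ))) h

theorem _root_.Twisted.exists_witnesses {r : K → K} {h M : ℕ} {P : K[X]} (hP : Twisted r h M P) :
    ∃ U : ℕ → K[X], (∀ m, (U m).degree ≤ h) ∧
      ∀ m < M, ∀ α, (hasseDeriv m P).eval α = r α * (U m).eval α := by
  have (m : ℕ) : ∃ U : K[X], U.degree ≤ h ∧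
      (m < M → ∀ α, (hasseDeriv m P).eval α = r α * U.eval α) := by
    by_cases hm : m < M
    · obtain ⟨U, hUdeg, hU⟩ := hP m hm
      exact ⟨U, hUdeg, fun _ => hU⟩
    · exact ⟨0, by simp, fun hm' => absurd hm' hm⟩
  choose U hUdeg hU using this
  exact ⟨U, hUdeg, hU⟩

section FiniteField

variable {F : Type*} [Field F] [Fintype F]

local notation "q" => Fintype.card F
local notation "Λ" => (X ^ Fintype.card F - X : F[X])

theorem monic_lam : Monic Λ := monic_X_pow_sub (by simp [Fintype.one_lt_card])

theorem degree_lam : degree Λ = q := degree_X_pow_sub_X Fintype.one_lt_card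

theorem eval_lam (α : F) : eval α Λ = 0 := by simp [FiniteField.pow_card]

theorem taylor_lam (α : F) : taylor α Λ = Λ := by
  rw [map_sub, taylor_X, taylor_X_pow, ← FiniteField.expand_card]
  simp

theorem eval_modByMonic_lam (P : F[X]) (α : F) : (P %ₘ Λ).eval α = P.eval α := by
  rw [modByMonic_eq_sub_mul_div, eval_sub, eval_mul, eval_lam, zero_mul, sub_zero]

theorem modByMonic_lam_eq_of_eval_eq {P S : F[X]} (hS : S.degree < q)
    (h : ∀ α, P.eval α = S.eval α) : P %ₘ Λ = S := by
  refine eq_of_degrees_lt_of_eval_finset_eq (s := univ) ?_ hS (by simpa [eval_modByMonic_lam])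
  simpa [degree_lam] using degree_modByMonic_lt P monic_lam

theorem pdegLE_sum {ι : Type*} {s : Finset ι} {P : ι → F[X]} {k : ℕ}
    (h : ∀ i ∈ s, PdegLE q (P i) k) : PdegLE q (∑ i ∈ s, P i) k := by
  intro ℓ
  have : hasseDeriv ℓ (∑ i ∈ s, P i) %ₘ Λ = ∑ i ∈ s, hasseDeriv ℓ (P i) %ₘ Λ := by
    rw [map_sum, ← modByMonicHom_apply, map_sum]
    rfl
  rw [this]
  exact (degree_sum_le _ _).trans (Finset.sup_le fun i hi => h i hi ℓ)

theorem pdegLE_of_card_le (P : F[X]) {k : ℕ} (hk : q ≤ k + 1) : PdegLE q P k := fun ℓ =>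
  Order.le_of_lt_succ (show _ < ((k + 1 : ℕ) : WithBot ℕ) from
    (degree_modByMonic_lt _ monic_lam).trans_le (by rw [degree_lam]; exact_mod_cast hk))

theorem eval_hasseDeriv_mul_lam_pow (a : F[X]) (i ℓ : ℕ) (α : F) :
    (hasseDeriv ℓ (a * Λ ^ i)).eval α
      = (∑ p ∈ antidiagonal ℓ, (Λ ^ i).coeff p.2 • hasseDeriv p.1 a).eval α := by
  rw [← taylor_coeff, taylor_mul, taylor_pow, taylor_lam, coeff_mul, eval_finsetSum]
  refine sum_congr rfl fun p _ => ?_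
  rw [eval_smul, smul_eq_mul, taylor_coeff, mul_comm]

theorem pdegLE_mul_lam_pow {a : F[X]} {k : ℕ} (ha : a.degree ≤ k) (hk : k < q) (i : ℕ) :
    PdegLE q (a * Λ ^ i) k := by
  intro ℓ
  have hS : (∑ p ∈ antidiagonal ℓ, (Λ ^ i).coeff p.2 • hasseDeriv p.1 a).degree ≤ k :=
    (degree_sum_le _ _).trans <| Finset.sup_le fun p _ =>
      (degree_smul_le _ _).trans (degree_hasseDeriv_le_of_degree_le ha p.1)
  rw [modByMonic_lam_eq_of_eval_eq (hS.trans_lt (by exact_mod_cast hk))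
    (eval_hasseDeriv_mul_lam_pow a i ℓ)]
  exact hS

theorem degree_lam_pow (i : ℕ) : (Λ ^ i).degree = (i * q : ℕ) := by
  rw [degree_pow, degree_lam, nsmul_eq_mul, Nat.cast_mul]

section Blocks

variable {n : ℕ} (d : Fin n → ℕ)

noncomputable def blockSum : ((i : Fin n) → F[X]_(d i)) →ₗ[F] F[X] :=
  ∑ i : Fin n, LinearMap.mulRight F (Λ ^ (i : ℕ)) ∘ₗ (degreeLT F (d i)).subtype ∘ₗ LinearMap.proj i

variable {d}

theorem blockSum_apply (v : (i : Fin n) → F[X]_(d i)) :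
    blockSum d v = ∑ i, (v i : F[X]) * Λ ^ (i : ℕ) := by
  simp [blockSum]

theorem blockSum_injective (hd : ∀ i, d i ≤ q) : Function.Injective (blockSum (F := F) d) := by
  rw [← LinearMap.ker_eq_bot, LinearMap.ker_eq_bot']
  intro v hv
  have hdeg (i : Fin n) : (v i : F[X]).degree < degree Λ :=
    (mem_degreeLT.mp (v i).2).trans_le (by rw [degree_lam]; exact_mod_cast hd i)
  have := eq_zero_of_sum_mul_pow_eq_zero monic_lam hdeg (by rwa [← blockSum_apply])
  funext i
  exact Subtype.ext (congrFun this i)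

theorem degree_blockSum_lt {T : ℕ} (hT : ∀ i : Fin n, d i + i * q ≤ T)
    (v : (i : Fin n) → F[X]_(d i)) : (blockSum d v).degree < T := by
  rw [blockSum_apply]
  refine (degree_sum_le _ _).trans_lt <| (Finset.sup_lt_iff (WithBot.bot_lt_coe T)).mpr
    fun i _ => ?_
  rw [degree_mul, degree_lam_pow]
  calc (v i : F[X]).degree + ((i * q : ℕ) : WithBot ℕ) < (d i : WithBot ℕ) + (i * q : ℕ) :=
        WithBot.add_lt_add_right WithBot.coe_ne_bot (mem_degreeLT.mp (v i).2)
    _ ≤ T := by exact_mod_cast hT i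

theorem pdegLE_blockSum {k : ℕ} (hd : ∀ i, d i ≤ k + 1) (hk : k < q)
    (v : (i : Fin n) → F[X]_(d i)) : PdegLE q (blockSum d v) k := by
  rw [blockSum_apply]
  refine pdegLE_sum fun i _ => pdegLE_mul_lam_pow (Order.le_of_lt_succ
    (show _ < ((k + 1 : ℕ) : WithBot ℕ) from ?_)) hk i
  exact (mem_degreeLT.mp (v i).2).trans_le (by exact_mod_cast hd i)

end Blocks

section Residual

/-- `(A·P - B·Q)^{[ℓ]} / ρ` at points where `P^{[m]} = ρ·U_m` and `Q^{[m]} = ρ·W_m`. Reducing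
mod `Λ` keeps the values on `𝔽_q` and bounds the degree by the pseudodegree. -/
noncomputable def residual (U W : ℕ → F[X]) (ℓ : ℕ) : F[X] × F[X] →ₗ[F] F[X] :=
  ∑ p ∈ antidiagonal ℓ,
    (LinearMap.mulRight F (U p.2) ∘ₗ modByMonicHom Λ ∘ₗ hasseDeriv p.1 ∘ₗ LinearMap.fst F _ _ -
      LinearMap.mulRight F (W p.2) ∘ₗ modByMonicHom Λ ∘ₗ hasseDeriv p.1 ∘ₗ LinearMap.snd F _ _)

variable {U W : ℕ → F[X]}

theorem residual_apply (ℓ : ℕ) (A B : F[X]) :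
    residual U W ℓ (A, B) = ∑ p ∈ antidiagonal ℓ,
      (hasseDeriv p.1 A %ₘ Λ * U p.2 - hasseDeriv p.1 B %ₘ Λ * W p.2) := by
  simp [residual]

theorem eval_hasseDeriv_mul_sub_mul {P Q : F[X]} {α ρ : F} {ℓ : ℕ}
    (hP : ∀ m ≤ ℓ, (hasseDeriv m P).eval α = ρ * (U m).eval α)
    (hQ : ∀ m ≤ ℓ, (hasseDeriv m Q).eval α = ρ * (W m).eval α) (A B : F[X]) :
    (hasseDeriv ℓ (A * P - B * Q)).eval α = ρ * (residual U W ℓ (A, B)).eval α := by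
  rw [residual_apply, map_sub, hasseDeriv_mul, hasseDeriv_mul, ← sum_sub_distrib, eval_finsetSum,
    eval_finsetSum, mul_sum]
  refine sum_congr rfl fun p hp => ?_
  have hp2 : p.2 ≤ ℓ := (mem_antidiagonal.mp hp) ▸ Nat.le_add_left _ _
  simp only [eval_sub, eval_mul, eval_modByMonic_lam, hP p.2 hp2, hQ p.2 hp2]
  ring

theorem degree_residual_le {A B : F[X]} {k h : ℕ} (hA : PdegLE q A k) (hB : PdegLE q B k)
    (hU : ∀ m, (U m).degree ≤ h) (hW : ∀ m, (W m).degree ≤ h) (ℓ : ℕ) :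
    (residual U W ℓ (A, B)).degree ≤ (k + h : ℕ) := by
  rw [residual_apply, Nat.cast_add]
  refine (degree_sum_le _ _).trans <| Finset.sup_le fun p _ => (degree_sub_le _ _).trans ?_
  exact max_le ((degree_mul_le _ _).trans (add_le_add (hA p.1) (hU p.2)))
    ((degree_mul_le _ _).trans (add_le_add (hB p.1) (hW p.2)))

end Residual

theorem exists_pdegLE_pair_hasseDeriv_eval_eq_zero {r₁ r₂ : F → F} {h M : ℕ} {P Q : F[X]}
    (hP : Twisted r₁ h M P) (hQ : Twisted r₂ h M Q) {k n T : ℕ} (hk : k < q) (d : Fin n → ℕ)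
    (hd : ∀ i, d i ≤ k + 1) (hT : ∀ i : Fin n, d i + i * q ≤ T)
    (hdim : M * (k + h + 1) < 2 * ∑ i, d i) :
    ∃ A B : F[X], ¬(A = 0 ∧ B = 0) ∧ A.degree < T ∧ B.degree < T ∧
      PdegLE q A k ∧ PdegLE q B k ∧
      ∀ α, r₁ α = r₂ α → ∀ ℓ < M, (hasseDeriv ℓ (A * P - B * Q)).eval α = 0 := by
  obtain ⟨U, hUdeg, hU⟩ := hP.exists_witnesses
  obtain ⟨W, hWdeg, hW⟩ := hQ.exists_witnesses
  let Φ : ((i : Fin n) → F[X]_(d i)) × ((i : Fin n) → F[X]_(d i)) →ₗ[F]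
      (Fin M → Fin (k + h + 1) → F) :=
    LinearMap.pi fun ℓ => LinearMap.pi fun s =>
      lcoeff F s ∘ₗ residual U W ℓ ∘ₗ (blockSum d).prodMap (blockSum d)
  have hrank : Module.finrank F (Fin M → Fin (k + h + 1) → F) <
      Module.finrank F (((i : Fin n) → F[X]_(d i)) × ((i : Fin n) → F[X]_(d i))) := by
    simpa [Module.finrank_pi_fintype, finrank_degreeLT, two_mul] using hdim
  obtain ⟨v, hvΦ, hv0⟩ := Submodule.exists_mem_ne_zero_of_ne_bot
    (LinearMap.ker_ne_bot_of_finrank_lt (f := Φ) hrank)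
  set A := blockSum d v.1
  set B := blockSum d v.2
  have hA : PdegLE q A k := pdegLE_blockSum hd hk v.1
  have hB : PdegLE q B k := pdegLE_blockSum hd hk v.2
  have hres (ℓ : ℕ) (hℓ : ℓ < M) : residual U W ℓ (A, B) = 0 := by
    ext s
    rcases lt_or_ge s (k + h + 1) with hs | hs
    · simpa [Φ] using congrFun (congrFun (LinearMap.mem_ker.mp hvΦ) ⟨ℓ, hℓ⟩) ⟨s, hs⟩
    · exact coeff_eq_zero_of_degree_lt <| (degree_residual_le hA hB hUdeg hWdeg ℓ).trans_lt
        (by exact_mod_cast hs)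
  have hinj := blockSum_injective (F := F) fun i => (hd i).trans hk
  refine ⟨A, B, ?_, degree_blockSum_lt hT v.1, degree_blockSum_lt hT v.2, hA, hB, ?_⟩
  · rintro ⟨hA0, hB0⟩
    exact hv0 (Prod.ext (hinj (hA0.trans (map_zero _).symm)) (hinj (hB0.trans (map_zero _).symm)))
  · intro α hα ℓ hℓ
    rw [eval_hasseDeriv_mul_sub_mul (ρ := r₁ α)
      (fun m hm => hU m (hm.trans_lt hℓ) α) (fun m hm => hα ▸ hW m (hm.trans_lt hℓ) α),
      hres ℓ hℓ, eval_zero, mul_zero]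

theorem exists_mul_eq_mul_of_card_le_succ {k : ℕ} (hk : q ≤ k + 1) {P Q : F[X]} {N : ℕ}
    (hN : 0 < N) (hP : P.degree < N) (hQ : Q.degree < N) :
    ∃ A B : F[X], ¬(A = 0 ∧ B = 0) ∧ A.degree < N ∧ B.degree < N ∧
      PdegLE q A k ∧ PdegLE q B k ∧ A * P = B * Q := by
  by_cases hQ0 : Q = 0
  · refine ⟨0, 1, by simp, by simp, ?_, pdegLE_of_card_le _ hk, pdegLE_of_card_le _ hk,
      by simp [hQ0]⟩
    rw [degree_one]
    exact_mod_cast hN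
  · exact ⟨Q, P, fun h => hQ0 h.1, hQ, hP, pdegLE_of_card_le _ hk, pdegLE_of_card_le _ hk,
      mul_comm Q P⟩

end FiniteField

theorem sum_min_sub_mul {q k a b : ℕ} (hk : k < q) :
    ∑ i : Fin (a + 1), min (k + 1) (a * q + b - i * q) = a * (k + 1) + min (k + 1) b := by
  have hfull (i : Fin a) : min (k + 1) (a * q + b - i * q) = k + 1 := by
    have : (i + 1) * q ≤ a * q := Nat.mul_le_mul_right q i.isLt
    rw [add_mul, one_mul] at this
    omega
  simp only [Fin.sum_univ_castSucc, Fin.val_castSucc, hfull, Fin.val_last, sum_const, card_univ,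
    Fintype.card_fin, smul_eq_mul, Nat.add_sub_cancel_left]

theorem exists_block_profile {q k h M : ℕ} (hk : k < q) {u : ℝ} (hu : 1 ≤ u)
    (hMu : (M : ℝ) * (k + h + 1) < 2 * u * k) :
    ∃ (n T : ℕ) (d : Fin n → ℕ), (T : ℝ) ≤ u * q ∧ (∀ i, d i ≤ k + 1) ∧
      (∀ i : Fin n, d i + i * q ≤ T) ∧ M * (k + h + 1) < 2 * ∑ i, d i := by
  have hq : 0 < q := by omega
  obtain ⟨T, hTu, huT⟩ : ∃ T : ℕ, (T : ℝ) ≤ u * q ∧ u * q < T + 1 :=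
    ⟨⌊u * q⌋₊, Nat.floor_le (by positivity), Nat.lt_floor_add_one _⟩
  obtain ⟨a, b, hb, rfl⟩ : ∃ a b, b < q ∧ a * q + b = T :=
    ⟨T / q, T % q, Nat.mod_lt _ hq, by rw [mul_comm]; exact Nat.div_add_mod T q⟩
  have ha : 1 ≤ a := by
    have : (q : ℝ) < (a * q + b : ℕ) + 1 := by nlinarith
    by_contra! ha0
    simp only [Nat.lt_one_iff.mp ha0, zero_mul, zero_add] at this
    exact_mod_cast (this.trans_le (by exact_mod_cast hb)).false
  refine ⟨a + 1, a * q + b, fun i => min (k + 1) (a * q + b - i * q), hTu,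
    fun i => min_le_left _ _, fun i => ?_, ?_⟩
  · have : (i : ℕ) * q ≤ a * q := Nat.mul_le_mul_right q (Nat.lt_succ_iff.mp i.isLt)
    dsimp only
    omega
  · rw [sum_min_sub_mul hk]
    have hcount : k * (b + 1) ≤ (a + min (k + 1) b) * q := by
      rcases le_total (k + 1) b with hkb | hbk
      · rw [min_eq_left hkb]; nlinarith
      · rw [min_eq_right hbk]; nlinarith
    have hdigits : u * k ≤ (a * (k + 1) + min (k + 1) b : ℕ) := by
      refine le_of_mul_le_mul_right ?_ (by exact_mod_cast hq : (0 : ℝ) < q)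
      have h1 : u * q * k ≤ ((a * q + b : ℕ) + 1) * k := by gcongr
      have h2 : ((k * (b + 1) : ℕ) : ℝ) ≤ ((a + min (k + 1) b) * q : ℕ) := by
        exact_mod_cast hcount
      push_cast at h1 h2 ⊢
      nlinarith
    have : (M : ℝ) * (k + h + 1) < 2 * (a * (k + 1) + min (k + 1) b : ℕ) := by linarith
    exact_mod_cast this

theorem sub_mul_card_le_card_filter_eq {α β : Type*} [Fintype α] [DecidableEq β] {f g : α → β}
    {γ : ℝ} (h : ({x | f x ≠ g x}.ncard : ℝ) ≤ γ * Fintype.card α) :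
    (1 - γ) * Fintype.card α ≤ #{x | f x = g x} := by
  have hcard : #{x | f x = g x} + {x | f x ≠ g x}.ncard = Fintype.card α := by
    rw [Set.ncard_eq_toFinset_card', Set.toFinset_ofPred, card_filter_add_card_filter_not,
      card_univ]
  have : (#{x | f x = g x} : ℝ) + {x | f x ≠ g x}.ncard = Fintype.card α := by
    exact_mod_cast hcard
  linarith

end PseudoPolynomial

open PseudoPolynomial

theorem stmt16_general {F : Type*} [Field F] [Fintype F] (q : ℕ) (hq : Fintype.card F = q)
    (c h M : ℕ) (hc : 0 < c)
    (γ : ℝ) (hγ0 : 0 ≤ γ)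
    (hcM : (c : ℝ) < (1 - 2 * γ) * (M : ℝ) / 2)
    (r₁ r₂ : F → F)
    (hΔ : ({α : F | r₁ α ≠ r₂ α}.ncard : ℝ) ≤ γ * (q : ℝ))
    (Fp Gp : F[X])
    (hFdeg : Fp.degree < ((c * q : ℕ) : WithBot ℕ))
    (hGdeg : Gp.degree < ((c * q : ℕ) : WithBot ℕ))
    (hFtw : Twisted r₁ h M Fp) (hGtw : Twisted r₂ h M Gp)
    (k : ℕ)
    (hk : (M : ℝ) / ((1 - 2 * γ) * (M : ℝ) - 2 * (c : ℝ)) * ((h : ℝ) + 1) < (k : ℝ)) :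
    ∃ A B : F[X], ¬(A = 0 ∧ B = 0) ∧
      A.degree < ((M * q : ℕ) : WithBot ℕ) ∧ B.degree < ((M * q : ℕ) : WithBot ℕ) ∧
      PdegLE q A k ∧ PdegLE q B k ∧
      A * Fp = B * Gp := by
  classical
  subst hq
  have hD : 0 < (1 - 2 * γ) * M - 2 * c := by linarith
  have hcM' : c ≤ M := by exact_mod_cast (show (c : ℝ) ≤ M by nlinarith)
  by_cases hkq : Fintype.card F ≤ k + 1
  · have hcq : ((c * Fintype.card F : ℕ) : WithBot ℕ) ≤ (M * Fintype.card F : ℕ) := by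
      exact_mod_cast Nat.mul_le_mul_right _ hcM'
    exact exists_mul_eq_mul_of_card_le_succ hkq (Nat.mul_pos (by omega) Fintype.card_pos)
      (hFdeg.trans_le hcq) (hGdeg.trans_le hcq)
  set u : ℝ := (1 - γ) * M - c
  have hu : 1 ≤ u := by nlinarith [(Nat.one_le_cast (α := ℝ)).mpr hc]
  have hMu : (M : ℝ) * (k + h + 1) < 2 * u * k := by
    rw [div_mul_eq_mul_div, div_lt_iff₀ hD] at hk
    linarith
  obtain ⟨n, T, d, hTu, hd, hT, hdim⟩ :=
    exists_block_profile (q := Fintype.card F) (by omega) hu hMu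
  obtain ⟨A, B, hAB, hA, hB, hpA, hpB, hvan⟩ :=
    exists_pdegLE_pair_hasseDeriv_eval_eq_zero hFtw hGtw (by omega) d hd hT hdim
  have hTM : (T : WithBot ℕ) ≤ (M * Fintype.card F : ℕ) := by
    have : u ≤ M := by nlinarith
    exact_mod_cast (show (T : ℝ) ≤ M * Fintype.card F from hTu.trans (by gcongr))
  have hs : T + c * Fintype.card F ≤ M * #{α | r₁ α = r₂ α} := by
    have := sub_mul_card_le_card_filter_eq hΔ
    exact_mod_cast (show (T : ℝ) + c * Fintype.card F ≤ M * #{α | r₁ α = r₂ α} by nlinarith)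
  exact ⟨A, B, hAB, hA.trans_le hTM, hB.trans_le hTM, hpA, hpB,
    mul_eq_mul_of_hasseDeriv_eval_eq_zero hA hB hFdeg hGdeg hs
      fun α hα => hvan α (mem_filter.mp hα).2⟩

/-- **robust version.** Let `c, h, M` be positive, `γ ∈ [0,1)` with
`c < (1-2γ)·M/2`, and `r₁, r₂ : 𝔽_q → 𝔽_q` with `Δ(r₁, r₂) ≤ γq`. Let `F, G ∈ 𝔽_q[X]`
of degree `< cq` be, respectively, `r₁`-twisted and `r₂`-twisted `(h, M)`-pseudopolynomials,
and let `k > (M/((1-2γ)M - 2c))·(h+1)`. Then there exist `A, B ∈ 𝔽_q[X]`, not both zero,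
each of degree `< Mq` and pseudodegree at most `k`, with `A·F = B·G`. -/
theorem stmt16 {F : Type*} [Field F] [Fintype F] (q : ℕ) (hq : Fintype.card F = q)
    (c h M : ℕ) (hc : 0 < c) (hh : 0 < h) (hM : 0 < M)
    (γ : ℝ) (hγ0 : 0 ≤ γ) (hγ1 : γ < 1)
    (hcM : (c : ℝ) < (1 - 2 * γ) * (M : ℝ) / 2)
    (r₁ r₂ : F → F)
    (hΔ : ({α : F | r₁ α ≠ r₂ α}.ncard : ℝ) ≤ γ * (q : ℝ))
    (Fp Gp : F[X])
    (hFdeg : Fp.degree < ((c * q : ℕ) : WithBot ℕ))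
    (hGdeg : Gp.degree < ((c * q : ℕ) : WithBot ℕ))
    (hFtw : Twisted r₁ h M Fp) (hGtw : Twisted r₂ h M Gp)
    (k : ℕ)
    (hk : (M : ℝ) / ((1 - 2 * γ) * (M : ℝ) - 2 * (c : ℝ)) * ((h : ℝ) + 1) < (k : ℝ)) :
    ∃ A B : F[X], ¬(A = 0 ∧ B = 0) ∧
      A.degree < ((M * q : ℕ) : WithBot ℕ) ∧ B.degree < ((M * q : ℕ) : WithBot ℕ) ∧
      PdegLE q A k ∧ PdegLE q B k ∧
      A * Fp = B * Gp :=
  stmt16_general q hq c h M hc γ hγ0 hcM r₁ r₂ hΔ Fp Gp hFdeg hGdeg hFtw hGtw k hk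
end
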